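/- arXiv:1802.05024 — 6 statements merged into one kernel-verified Lean document; each statement's English description precedes it below -/
import Mathlib

section
/- Let Γ be a finite-index subgroup of SL(2,ℤ) and let e₁ = (1,0)ᵀ. Suppose that for every prime p there exist matrices A₁, A₂ ∈ SL(2,ℤ) such that: (A) for every j ∈ ℕ, the reduction mod p of the vector A₁e₁ is not equal to j times the reduction mod p of A₂e₁ (as vectors in (ℤ/pℤ)²); and (B) there exist m₁, m₂ ∈ ℕ with p ∤ m₁, p ∤ m₂, and A₁T^{m₁}A₁⁻¹ ∈ Γ and A₂T^{m₂}A₂⁻¹ ∈ Γ. Then for every n ≥ 1 the canonical projection SL(2,ℤ) → SL(2,ℤ/nℤ) maps Γ onto all of SL(2,ℤ/nℤ), i.e. Γ is a totally non congruence group. -/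
/-- The matrix `T = [[1,1],[0,1]]` in `SL(2,ℤ)`. -/
def Tmat : Matrix.SpecialLinearGroup (Fin 2) ℤ :=
  ⟨!![1, 1; 0, 1], by norm_num [Matrix.det_fin_two_of]⟩

/-!
Write `n = p ^ k * q` with `p ∤ q` and induct on `n`. By the Chinese remainder theorem the image
`H` of `Γ` in `SL(2, ℤ/n)` is everything once it surjects onto `SL(2, ℤ/q)`, which is the induction
hypothesis, and `H ∩ ker (mod q)` surjects onto `SL(2, ℤ/p^k)`. Raising `Aᵢ T^{mᵢ} Aᵢ⁻¹` to a power
`q s` with `mᵢ q s ≡ t (mod p^k)` shows that the image of `H ∩ ker (mod q)` contains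
`Bᵢ [[1,t],[0,1]] Bᵢ⁻¹` for every `t`, where `Bᵢ = Aᵢ mod p^k`. Condition (A) says that
`(B₁⁻¹ B₂)₁₀` is a unit, so some `D = [[1,j],[0,1]] B₁⁻¹ B₂` has `D₀₀ = 0`. Conjugation by such a
`D` maps upper unipotents onto all lower ones, so the image also contains every
`B₁ [[1,0],[s,1]] B₁⁻¹`. Finally, upper and lower unipotents generate `SL(2, R)` over any local
ring `R`, such as `ℤ/p^k`.
-/

open scoped MatrixGroups

namespace SL2

open Matrix

variable {R S : Type*} [CommRing R] [CommRing S]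

def upper (t : R) : SL(2, R) :=
  ⟨!![1, t; 0, 1], by simp [det_fin_two_of]⟩

def lower (t : R) : SL(2, R) :=
  ⟨!![1, 0; t, 1], by simp [det_fin_two_of]⟩

@[simp] lemma coe_upper (t : R) : (upper t : Matrix (Fin 2) (Fin 2) R) = !![1, t; 0, 1] := rfl

@[simp] lemma coe_lower (t : R) : (lower t : Matrix (Fin 2) (Fin 2) R) = !![1, 0; t, 1] := rfl

@[simp] lemma upper_zero : upper (0 : R) = 1 := by
  ext i j; fin_cases i <;> fin_cases j <;> rfl

lemma upper_add (s t : R) : upper (s + t) = upper s * upper t := by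
  ext i j; fin_cases i <;> fin_cases j <;> simp [add_comm]

lemma upper_pow (t : R) (m : ℕ) : upper t ^ m = upper (m * t) := by
  induction m with
  | zero => simp
  | succ m ih => rw [pow_succ, ih, ← upper_add, Nat.cast_succ, add_one_mul]

lemma map_upper (f : R →+* S) (t : R) : SpecialLinearGroup.map f (upper t) = upper (f t) := by
  ext i j; fin_cases i <;> fin_cases j <;> simp

lemma det_fin_two_eq_one (M : SL(2, R)) : M 0 0 * M 1 1 - M 0 1 * M 1 0 = 1 := by
  rw [← det_fin_two]; exact M.det_coe

lemma upper_mul_apply_zero_zero (t : R) (M : SL(2, R)) : (upper t * M) 0 0 = M 0 0 + t * M 1 0 := by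
  simp [mul_apply, Fin.sum_univ_two]

lemma upper_mul_apply_one_zero (t : R) (M : SL(2, R)) : (upper t * M) 1 0 = M 1 0 := by
  simp [mul_apply, Fin.sum_univ_two]

lemma lower_mul_apply_one_zero (t : R) (M : SL(2, R)) : (lower t * M) 1 0 = t * M 0 0 + M 1 0 := by
  simp [mul_apply, Fin.sum_univ_two]

lemma conj_upper_of_apply_zero_zero_eq_zero (M : SL(2, R)) (h : M 0 0 = 0) (t : R) :
    M * upper t * M⁻¹ = lower (-(t * M 1 0 ^ 2)) := by
  have hdet := det_fin_two_eq_one M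
  ext i j
  fin_cases i <;> fin_cases j <;>
    simp [adjugate_fin_two, mul_apply, Fin.sum_univ_two, h] at hdet ⊢
  · exact hdet
  · ring
  · linear_combination hdet

lemma eq_upper_mul_lower_mul_upper (M : SL(2, R)) {v : R} (hv : M 1 0 * v = 1) :
    M = upper ((M 0 0 - 1) * v) * lower (M 1 0) * upper ((M 1 1 - 1) * v) := by
  have hdet := det_fin_two_eq_one M
  ext i j
  fin_cases i <;> fin_cases j <;> simp [mul_apply, Fin.sum_univ_two]
  · linear_combination (1 - M 0 0) * hv
  · linear_combination (-(M 0 1 + (M 0 0 * M 1 1 - M 0 0 - M 1 1 + 1) * v)) * hv - v * hdet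
  · linear_combination (1 - M 1 1) * hv

open IsLocalRing in
lemma isUnit_apply_zero_zero_add_apply_one_zero [IsLocalRing R] (M : SL(2, R))
    (hc : ¬IsUnit (M 1 0)) : IsUnit (M 0 0 + M 1 0) := by
  by_contra h
  have hc' : M 1 0 ∈ maximalIdeal R := hc
  have ha : M 0 0 ∈ maximalIdeal R := by
    simpa using sub_mem (show M 0 0 + M 1 0 ∈ maximalIdeal R from h) hc'
  have hone : (1 : R) ∈ maximalIdeal R :=
    det_fin_two_eq_one M ▸ sub_mem (Ideal.mul_mem_right _ _ ha) (Ideal.mul_mem_left _ _ hc')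
  exact (maximalIdeal.isMaximal R).ne_top ((Ideal.eq_top_iff_one _).mpr hone)

lemma closure_range_upper_union_range_lower [IsLocalRing R] :
    Subgroup.closure (Set.range upper ∪ Set.range lower : Set SL(2, R)) = ⊤ := by
  set K := Subgroup.closure (Set.range upper ∪ Set.range lower : Set SL(2, R))
  have hU (t : R) : upper t ∈ K := Subgroup.subset_closure (Or.inl ⟨t, rfl⟩)
  have hL (t : R) : lower t ∈ K := Subgroup.subset_closure (Or.inr ⟨t, rfl⟩)
  have hunit (N : SL(2, R)) (hN : IsUnit (N 1 0)) : N ∈ K := by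
    obtain ⟨v, hv⟩ := hN.exists_right_inv
    rw [eq_upper_mul_lower_mul_upper N hv]
    exact mul_mem (mul_mem (hU _) (hL _)) (hU _)
  refine eq_top_iff.mpr fun M _ => ?_
  by_cases hc : IsUnit (M 1 0)
  · exact hunit M hc
  · have hLM : lower 1 * M ∈ K := by
      refine hunit _ ?_
      rw [lower_mul_apply_one_zero, one_mul]
      exact isUnit_apply_zero_zero_add_apply_one_zero M hc
    simpa using mul_mem (inv_mem (hL 1)) hLM

lemma eq_top_of_conj_upper_mem [IsLocalRing R] (H : Subgroup SL(2, R)) {B₁ B₂ : SL(2, R)}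
    (hB : IsUnit ((B₁⁻¹ * B₂) 1 0)) (h₁ : ∀ t, B₁ * upper t * B₁⁻¹ ∈ H)
    (h₂ : ∀ t, B₂ * upper t * B₂⁻¹ ∈ H) : H = ⊤ := by
  set C := B₁⁻¹ * B₂
  obtain ⟨v, hv⟩ := hB.exists_right_inv
  set D := upper (-(C 0 0 * v)) * C
  have hD₀₀ : D 0 0 = 0 := by
    rw [upper_mul_apply_zero_zero]; linear_combination (-C 0 0) * hv
  have hlower (s : R) : B₁ * lower s * B₁⁻¹ ∈ H := by
    have hconj : D * upper (-(s * v ^ 2)) * D⁻¹ = lower s := by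
      rw [conj_upper_of_apply_zero_zero_eq_zero D hD₀₀, upper_mul_apply_one_zero]
      congr 1
      linear_combination (s * v * C 1 0 + s) * hv
    have hprod : B₁ * lower s * B₁⁻¹ = (B₁ * upper (-(C 0 0 * v)) * B₁⁻¹) *
        (B₂ * upper (-(s * v ^ 2)) * B₂⁻¹) * (B₁ * upper (-(C 0 0 * v)) * B₁⁻¹)⁻¹ := by
      rw [← hconj]; simp only [D, C]; group
    rw [hprod]
    exact mul_mem (mul_mem (h₁ _) (h₂ _)) (inv_mem (h₁ _))
  have hcomap : H.comap (MulAut.conj B₁).toMonoidHom = ⊤ := by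
    rw [eq_top_iff, ← closure_range_upper_union_range_lower, Subgroup.closure_le]
    rintro _ (⟨t, rfl⟩ | ⟨t, rfl⟩)
    · exact h₁ t
    · exact hlower t
  refine eq_top_iff.mpr fun M _ => ?_
  have hM : B₁⁻¹ * M * B₁ ∈ H.comap (MulAut.conj B₁).toMonoidHom := hcomap ▸ Subgroup.mem_top _
  simpa [mul_assoc] using hM

lemma apply_zero_eq_mul_of_inv_mul_apply_one_zero_eq_zero (B₁ B₂ : SL(2, R))
    (h : (B₁⁻¹ * B₂) 1 0 = 0) (i : Fin 2) : B₁ i 0 = (B₁⁻¹ * B₂) 1 1 * B₂ i 0 := by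
  set C := B₁⁻¹ * B₂
  have hcol : B₂ i 0 = B₁ i 0 * C 0 0 := by
    conv_lhs => rw [show B₂ = B₁ * C by simp [C]]
    simp [mul_apply, Fin.sum_univ_two, h]
  rw [hcol]
  linear_combination (-B₁ i 0) * det_fin_two_eq_one C - (B₁ i 0 * C 0 1) * h

end SL2

namespace ZMod

variable {p k : ℕ}

lemma isUnit_iff_castHom_ne_zero (hp : p.Prime) (hk : k ≠ 0) (x : ZMod (p ^ k)) :
    IsUnit x ↔ castHom (dvd_pow_self p hk) (ZMod p) x ≠ 0 := by
  have : NeZero (p ^ k) := ⟨pow_ne_zero k hp.ne_zero⟩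
  rw [← natCast_zmod_val x, isUnit_natCast_iff_not_dvd_pow hp (Nat.pos_of_ne_zero hk), map_natCast,
    Ne, natCast_eq_zero_iff]

lemma isLocalRing_pow (hp : p.Prime) (hk : k ≠ 0) : IsLocalRing (ZMod (p ^ k)) :=
  have : Nontrivial (ZMod (p ^ k)) :=
    nontrivial_iff.mpr (Nat.pow_eq_one.not.mpr (by simp [hp.ne_one, hk]))
  .of_isUnit_or_isUnit_one_sub_self fun x => by
    simp only [isUnit_iff_castHom_ne_zero hp hk, map_sub, map_one]
    have := Fact.mk hp
    by_contra! h
    simp [h.1] at h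

lemma eq_of_castHom_eq_of_castHom_eq {a b : ℕ} (hab : a.Coprime b) {x y : ZMod (a * b)}
    (ha : castHom (dvd_mul_right a b) (ZMod a) x = castHom (dvd_mul_right a b) (ZMod a) y)
    (hb : castHom (dvd_mul_left b a) (ZMod b) x = castHom (dvd_mul_left b a) (ZMod b) y) :
    x = y := by
  obtain ⟨z, rfl⟩ := intCast_surjective x
  obtain ⟨w, rfl⟩ := intCast_surjective y
  simp only [map_intCast, intCast_eq_intCast_iff] at ha hb ⊢
  push_cast
  exact (Int.modEq_and_modEq_iff_modEq_mul (by simpa using hab)).mp ⟨ha, hb⟩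

end ZMod

lemma Subgroup.eq_top_of_map_eq_top_of_map_inf_ker_eq_top {G A B : Type*} [Group G] [Group A]
    [Group B] {f : G →* A} {g : G →* B} (hfg : Function.Injective (f.prod g)) {H : Subgroup G}
    (hg : H.map g = ⊤) (hf : (H ⊓ g.ker).map f = ⊤) : H = ⊤ := by
  refine eq_top_iff.mpr fun x _ => ?_
  obtain ⟨y, hy, hgy⟩ : g x ∈ H.map g := hg ▸ Subgroup.mem_top _
  obtain ⟨z, ⟨hz, hgz⟩, hfz⟩ : f (x * y⁻¹) ∈ (H ⊓ g.ker).map f := hf ▸ Subgroup.mem_top _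
  have hzxy : z = x * y⁻¹ := hfg (Prod.ext hfz (by simp_all [MonoidHom.mem_ker.mp hgz]))
  simpa [hzxy] using mul_mem hz hy

namespace Matrix.SpecialLinearGroup

variable {ι : Type*} [Fintype ι] [DecidableEq ι]

lemma map_comp_map {R S T : Type*} [CommRing R] [CommRing S] [CommRing T] (f : R →+* S)
    (g : S →+* T) : (map g).comp (map f) = (map (g.comp f) : SpecialLinearGroup ι R →* _) := rfl

lemma map_castHom_comp_map_intCast {m n : ℕ} (h : m ∣ n) :
    (map (ZMod.castHom h (ZMod m))).comp (map (Int.castRingHom (ZMod n))) =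
      (map (Int.castRingHom (ZMod m)) : SpecialLinearGroup ι ℤ →* _) := by
  rw [map_comp_map, RingHom.ext_int ((ZMod.castHom h (ZMod m)).comp _) (Int.castRingHom _)]

lemma injective_map_castHom_prod_map_castHom {a b : ℕ} (hab : a.Coprime b) :
    Function.Injective ((map (ZMod.castHom (dvd_mul_right a b) (ZMod a))).prod
      (map (ZMod.castHom (dvd_mul_left b a) (ZMod b))) :
        SpecialLinearGroup ι (ZMod (a * b)) →* _) := fun x y hxy => by
  ext i j
  exact ZMod.eq_of_castHom_eq_of_castHom_eq hab congr($(congrArg Prod.fst hxy) i j)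
    congr($(congrArg Prod.snd hxy) i j)

end Matrix.SpecialLinearGroup

open Matrix.SpecialLinearGroup

lemma Tmat_pow (s : ℕ) : Tmat ^ s = SL2.upper (s : ℤ) := by
  rw [show Tmat = SL2.upper 1 from rfl, SL2.upper_pow, mul_one]

lemma map_conj_Tmat_pow {R : Type*} [CommRing R] (φ : ℤ →+* R) (A : SL(2, ℤ)) (s : ℕ) :
    map φ (A * Tmat ^ s * A⁻¹) = map φ A * SL2.upper (s : R) * (map φ A)⁻¹ := by
  simp [Tmat_pow, SL2.map_upper]

section PrimePower

variable {p k q : ℕ}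

lemma isUnit_map_inv_mul_map_apply_one_zero (hp : p.Prime) (hk : k ≠ 0) {A₁ A₂ : SL(2, ℤ)}
    (hA : ∀ c : ZMod p, ∃ i, ((A₁ i 0 : ℤ) : ZMod p) ≠ c * A₂ i 0) :
    IsUnit (((map (Int.castRingHom (ZMod (p ^ k))) A₁)⁻¹ *
      map (Int.castRingHom (ZMod (p ^ k))) A₂) 1 0) := by
  have := Fact.mk hp
  set B₁ := map (Int.castRingHom (ZMod p)) A₁
  set B₂ := map (Int.castRingHom (ZMod p)) A₂
  have hB : (B₁⁻¹ * B₂) 1 0 = (((A₁⁻¹ * A₂) 1 0 : ℤ) : ZMod p) := by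
    rw [← map_inv, ← map_mul]; rfl
  rw [← map_inv, ← map_mul, ZMod.isUnit_iff_castHom_ne_zero hp hk]
  intro h0
  obtain ⟨i, hi⟩ := hA ((B₁⁻¹ * B₂) 1 1)
  refine hi (SL2.apply_zero_eq_mul_of_inv_mul_apply_one_zero_eq_zero B₁ B₂ ?_ i)
  rwa [hB, ← map_intCast (ZMod.castHom (dvd_pow_self p hk) (ZMod p))]

lemma conj_upper_mem_map_inf_ker (Γ : Subgroup SL(2, ℤ)) (hp : p.Prime) (hk : k ≠ 0)
    (hpq : ¬p ∣ q) {A : SL(2, ℤ)} {m : ℕ} (hm : ¬p ∣ m) (hA : A * Tmat ^ m * A⁻¹ ∈ Γ)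
    (t : ZMod (p ^ k)) :
    map (Int.castRingHom (ZMod (p ^ k))) A * SL2.upper t *
        (map (Int.castRingHom (ZMod (p ^ k))) A)⁻¹ ∈
      (Γ.map (map (Int.castRingHom (ZMod (p ^ k * q)))) ⊓
        (map (ZMod.castHom (dvd_mul_left q (p ^ k)) (ZMod q))).ker).map
          (map (ZMod.castHom (dvd_mul_right (p ^ k) q) (ZMod (p ^ k)))) := by
  obtain ⟨u, hu⟩ : IsUnit ((m * q : ℕ) : ZMod (p ^ k)) :=
    (ZMod.isUnit_natCast_iff_not_dvd_pow hp (Nat.pos_of_ne_zero hk)).mpr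
      fun h => (hp.dvd_mul.mp h).elim hm hpq
  set s := q * (u⁻¹ * t : ZMod (p ^ k)).val
  have hγ : A * Tmat ^ (m * s) * A⁻¹ ∈ Γ := by
    rw [pow_mul, ← conj_pow]; exact pow_mem hA s
  have hmod_q : ((m * s : ℕ) : ZMod q) = 0 := by
    rw [ZMod.natCast_eq_zero_iff]; exact (dvd_mul_right q _).mul_left m
  have hmod_pk : ((m * s : ℕ) : ZMod (p ^ k)) = t := by
    have : NeZero (p ^ k) := ⟨pow_ne_zero k hp.ne_zero⟩
    rw [← mul_assoc, Nat.cast_mul, ← hu, ZMod.natCast_zmod_val, Units.mul_inv_cancel_left]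
  refine ⟨_, ⟨⟨_, hγ, rfl⟩, MonoidHom.mem_ker.mpr ?_⟩, ?_⟩
  · rw [← MonoidHom.comp_apply, map_castHom_comp_map_intCast,
      map_conj_Tmat_pow, hmod_q, SL2.upper_zero, mul_one, mul_inv_cancel]
  · rw [← MonoidHom.comp_apply, map_castHom_comp_map_intCast, map_conj_Tmat_pow, hmod_pk]

lemma map_eq_top_of_pow_mul (Γ : Subgroup SL(2, ℤ)) (hp : p.Prime) (hk : k ≠ 0) (hpq : ¬p ∣ q)
    {A₁ A₂ : SL(2, ℤ)} (hA : ∀ c : ZMod p, ∃ i, ((A₁ i 0 : ℤ) : ZMod p) ≠ c * A₂ i 0)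
    {m₁ m₂ : ℕ} (hm₁ : ¬p ∣ m₁) (hm₂ : ¬p ∣ m₂) (hA₁ : A₁ * Tmat ^ m₁ * A₁⁻¹ ∈ Γ)
    (hA₂ : A₂ * Tmat ^ m₂ * A₂⁻¹ ∈ Γ) (hq : Γ.map (map (Int.castRingHom (ZMod q))) = ⊤) :
    Γ.map (map (Int.castRingHom (ZMod (p ^ k * q)))) = ⊤ := by
  have hcop : (p ^ k).Coprime q := .pow_left k (hp.coprime_iff_not_dvd.mpr hpq)
  refine Subgroup.eq_top_of_map_eq_top_of_map_inf_ker_eq_top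
    (injective_map_castHom_prod_map_castHom hcop) ?_ ?_
  · rw [Subgroup.map_map, map_castHom_comp_map_intCast, hq]
  · have := ZMod.isLocalRing_pow hp hk
    exact SL2.eq_top_of_conj_upper_mem _ (isUnit_map_inv_mul_map_apply_one_zero hp hk hA)
      (conj_upper_mem_map_inf_ker Γ hp hk hpq hm₁ hA₁)
      (conj_upper_mem_map_inf_ker Γ hp hk hpq hm₂ hA₂)

end PrimePower

theorem totally_noncongruence_criterion_general
    (Γ : Subgroup (Matrix.SpecialLinearGroup (Fin 2) ℤ))
    (h : ∀ p : ℕ, p.Prime →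
      ∃ A₁ A₂ : Matrix.SpecialLinearGroup (Fin 2) ℤ,
        (∀ j : ℕ,
          (fun i : Fin 2 =>
            ((((A₁ : Matrix (Fin 2) (Fin 2) ℤ).mulVec ![1, 0]) i : ℤ) : ZMod p)) ≠
          (fun i : Fin 2 =>
            (j : ZMod p) * ((((A₂ : Matrix (Fin 2) (Fin 2) ℤ).mulVec ![1, 0]) i : ℤ) : ZMod p))) ∧
        ∃ m₁ m₂ : ℕ, ¬ (p ∣ m₁) ∧ ¬ (p ∣ m₂) ∧
          A₁ * Tmat ^ m₁ * A₁⁻¹ ∈ Γ ∧ A₂ * Tmat ^ m₂ * A₂⁻¹ ∈ Γ) :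
    ∀ n : ℕ, 1 ≤ n →
      Subgroup.map (Matrix.SpecialLinearGroup.map (Int.castRingHom (ZMod n))) Γ = ⊤ := by
  intro n
  induction n using Nat.recOnPrimePow with
  | zero => simp
  | one =>
    have : Subsingleton SL(2, ZMod 1) := ⟨fun x y => Subtype.ext (Subsingleton.elim _ _)⟩
    exact fun _ => Subsingleton.elim _ _
  | prime_pow_mul q p k hp hpq hk ih =>
    intro hn
    obtain ⟨A₁, A₂, hA, m₁, m₂, hm₁, hm₂, hA₁, hA₂⟩ := h p hp
    refine map_eq_top_of_pow_mul Γ hp hk.ne' hpq (fun c => ?_) hm₁ hm₂ hA₁ hA₂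
      (ih (Nat.pos_of_mul_pos_left hn))
    have := Fact.mk hp
    by_contra! hc
    exact hA c.val (funext fun i => by simp [Matrix.mulVec, dotProduct, Fin.sum_univ_two, hc i])

/-- **Theorem (criterion for totally non congruence groups).**
If for every prime `p` there are `A₁, A₂ ∈ SL(2,ℤ)` such that
(A) for all `j ∈ ℕ` the reduction mod `p` of `A₁e₁` differs from `j` times the
reduction mod `p` of `A₂e₁`, and
(B) there are `m₁, m₂` not divisible by `p` with `AᵢT^{mᵢ}Aᵢ⁻¹ ∈ Γ`,
then `Γ` surjects onto `SL(2,ℤ/nℤ)` for every `n ≥ 1`. -/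
theorem totally_noncongruence_criterion
    (Γ : Subgroup (Matrix.SpecialLinearGroup (Fin 2) ℤ)) (hΓ : Γ.FiniteIndex)
    (h : ∀ p : ℕ, p.Prime →
      ∃ A₁ A₂ : Matrix.SpecialLinearGroup (Fin 2) ℤ,
        (∀ j : ℕ,
          (fun i : Fin 2 =>
            ((((A₁ : Matrix (Fin 2) (Fin 2) ℤ).mulVec ![1, 0]) i : ℤ) : ZMod p)) ≠
          (fun i : Fin 2 =>
            (j : ZMod p) * ((((A₂ : Matrix (Fin 2) (Fin 2) ℤ).mulVec ![1, 0]) i : ℤ) : ZMod p))) ∧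
        ∃ m₁ m₂ : ℕ, ¬ (p ∣ m₁) ∧ ¬ (p ∣ m₂) ∧
          A₁ * Tmat ^ m₁ * A₁⁻¹ ∈ Γ ∧ A₂ * Tmat ^ m₂ * A₂⁻¹ ∈ Γ) :
    ∀ n : ℕ, 1 ≤ n →
      Subgroup.map (Matrix.SpecialLinearGroup.map (Int.castRingHom (ZMod n))) Γ = ⊤ :=
  totally_noncongruence_criterion_general Γ h
end

section
/- Let p be a prime and r ≥ 1, and let Γ be a subgroup of SL(2, ℤ/p^rℤ). Suppose Γ contains A₁TA₁⁻¹ and A₂TA₂⁻¹ for some A₁, A₂ ∈ SL(2, ℤ/p^rℤ) such that for every m ∈ ℕ the reduction mod p of m·(A₁e₁) is not equal to the reduction mod p of A₂e₁ (as vectors in (ℤ/pℤ)², where e₁ = (1,0)ᵀ ∈ (ℤ/p^rℤ)²). Then Γ = SL(2, ℤ/p^rℤ). -/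
/-!
Conjugating by `A₁`, we may assume that `Γ` contains `T` and `B T B⁻¹` with `B = A₁⁻¹ A₂`; the
hypothesis on first columns says precisely that the lower-left entry `c` of `B` is a unit, since
`A₂ e₁ = B₀₀ • A₁ e₁ + c • A₁ e₂`. Powers of `T` give every upper unipotent matrix. Conjugating
`B T B⁻¹` by a suitable upper unipotent matrix turns `B` into a matrix with first column `(0, c)`,
and the result is the lower unipotent matrix with entry `-c²`; as `c` is a unit, its powers give
every lower unipotent matrix. Over the local ring `ℤ/p^rℤ` these generate `SL(2)`: a matrix with
a unit lower-left entry factors as upper · lower · upper, and otherwise its upper-left entry is a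
unit and one lower unipotent factor brings it to that case.
-/

/-- The matrix `T = [[1,1],[0,1]]` in `SL(2, ℤ/mℤ)`. -/
def Tmod (m : ℕ) : Matrix.SpecialLinearGroup (Fin 2) (ZMod m) :=
  ⟨!![1, 1; 0, 1], by norm_num [Matrix.det_fin_two_of]⟩

open Matrix MatrixGroups

namespace Matrix.SpecialLinearGroup

variable {ι F : Type*} [DecidableEq ι] [Fintype ι] [CommRing F]

lemma transvection_pow {i j : ι} (hij : i ≠ j) (b : F) (k : ℕ) :
    transvection hij b ^ k = transvection hij (k * b) := by
  induction k with
  | zero => simp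
  | succ k ih => rw [pow_succ, ih, ← transvection_add]; push_cast; ring_nf

lemma transvection_mem_of_isUnit {n : ℕ} [NeZero n] {i j : ι} (hij : i ≠ j)
    {H : Subgroup (SpecialLinearGroup ι (ZMod n))} {u : ZMod n} (hu : IsUnit u)
    (hH : transvection hij u ∈ H) (x : ZMod n) : transvection hij x ∈ H := by
  have hx : ((x * Ring.inverse u).val : ZMod n) * u = x := by
    rw [ZMod.natCast_zmod_val, mul_assoc, Ring.inverse_mul_cancel u hu, mul_one]
  rw [← hx, ← transvection_pow]
  exact pow_mem hH _

end Matrix.SpecialLinearGroup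

namespace Matrix.SL2

open Matrix.SpecialLinearGroup

variable {R : Type*} [CommRing R]

abbrev upper (x : R) : SL(2, R) := SpecialLinearGroup.transvection zero_ne_one x

abbrev lower (x : R) : SL(2, R) := SpecialLinearGroup.transvection one_ne_zero x

@[simp]
lemma coe_upper (x : R) : (upper x : Matrix (Fin 2) (Fin 2) R) = !![1, x; 0, 1] := by
  ext i j; fin_cases i <;> fin_cases j <;> simp [transvection_coe]

@[simp]
lemma coe_lower (x : R) : (lower x : Matrix (Fin 2) (Fin 2) R) = !![1, 0; x, 1] := by
  ext i j; fin_cases i <;> fin_cases j <;> simp [transvection_coe]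

lemma Tmod_eq_upper_one (n : ℕ) : Tmod n = upper 1 := by
  ext i j; fin_cases i <;> fin_cases j <;> simp [Tmod]

lemma det_fin_two_eq_one (M : SL(2, R)) : M 0 0 * M 1 1 - M 0 1 * M 1 0 = 1 := by
  rw [← det_fin_two]; exact M.2

lemma eq_upper_mul_lower_mul_upper (M : SL(2, R)) (hc : IsUnit (M 1 0)) :
    M = upper ((M 0 0 - 1) * Ring.inverse (M 1 0)) * lower (M 1 0) *
      upper ((M 1 1 - 1) * Ring.inverse (M 1 0)) := by
  have hinv := Ring.mul_inverse_cancel _ hc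
  have hdet := det_fin_two_eq_one M
  ext i j
  fin_cases i <;> fin_cases j <;> simp
  · linear_combination (1 - M 0 0) * hinv
  · linear_combination (-M 0 1 - (M 0 0 - 1) * (M 1 1 - 1) * Ring.inverse (M 1 0)) * hinv -
      Ring.inverse (M 1 0) * hdet
  · linear_combination (1 - M 1 1) * hinv

lemma isUnit_apply_zero_zero_or_isUnit_apply_one_zero [IsLocalRing R] (M : SL(2, R)) :
    IsUnit (M 0 0) ∨ IsUnit (M 1 0) := by
  have hdet : IsUnit (M 0 0 * M 1 1 + -(M 0 1 * M 1 0)) := by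
    rw [← sub_eq_add_neg, det_fin_two_eq_one]; exact isUnit_one
  refine (IsLocalRing.isUnit_or_isUnit_of_isUnit_add hdet).imp (fun h => ?_) (fun h => ?_)
  · exact isUnit_of_mul_isUnit_left h
  · exact isUnit_of_mul_isUnit_right ((IsUnit.neg_iff _).1 h)

lemma eq_top_of_upper_mem_of_lower_mem [IsLocalRing R] {H : Subgroup SL(2, R)}
    (hU : ∀ x, upper x ∈ H) (hL : ∀ x, lower x ∈ H) : H = ⊤ := by
  have mem_of_isUnit : ∀ M : SL(2, R), IsUnit (M 1 0) → M ∈ H := fun M hc => by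
    rw [eq_upper_mul_lower_mul_upper M hc]
    exact mul_mem (mul_mem (hU _) (hL _)) (hU _)
  refine (Subgroup.eq_top_iff' H).2 fun M => ?_
  by_cases hc : IsUnit (M 1 0)
  · exact mem_of_isUnit M hc
  have ha := (isUnit_apply_zero_zero_or_isUnit_apply_one_zero M).resolve_right hc
  have hLM : IsUnit ((lower 1 * M : SL(2, R)) 1 0) := by
    have : (lower 1 * M : SL(2, R)) 1 0 + -M 1 0 = M 0 0 := by simp [Matrix.mul_apply]
    refine (IsLocalRing.isUnit_or_isUnit_of_isUnit_add (this ▸ ha)).resolve_right ?_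
    rwa [IsUnit.neg_iff]
  have hM : M = lower (-1) * (lower 1 * M) := by
    rw [← mul_assoc, ← transvection_add, neg_add_cancel, transvection_coeff_zero, one_mul]
  rw [hM]
  exact mul_mem (hL _) (mem_of_isUnit _ hLM)

lemma conj_upper_eq_lower (C : SL(2, R)) (hC : C 0 0 = 0) (x : R) :
    C * upper x * C⁻¹ = lower (-(C 1 0 ^ 2 * x)) := by
  have hdet := det_fin_two_eq_one C
  rw [hC, zero_mul, zero_sub] at hdet
  ext i j
  fin_cases i <;> fin_cases j <;>
    simp [Matrix.SpecialLinearGroup.coe_inv, adjugate_fin_two, Matrix.mul_apply, hC]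
  · exact hdet
  · ring
  · linear_combination hdet

lemma upper_mul_apply_zero_zero (s : R) (M : SL(2, R)) :
    (upper s * M) 0 0 = M 0 0 + s * M 1 0 := by
  simp [Matrix.mul_apply]

lemma upper_mul_apply_one_zero (s : R) (M : SL(2, R)) : (upper s * M) 1 0 = M 1 0 := by
  simp [Matrix.mul_apply]

lemma eq_top_of_upper_one_mem_of_conj_mem {n : ℕ} [NeZero n] [IsLocalRing (ZMod n)]
    {H : Subgroup SL(2, ZMod n)} (B : SL(2, ZMod n)) (hB : IsUnit (B 1 0))
    (hT : upper 1 ∈ H) (hBT : B * upper 1 * B⁻¹ ∈ H) : H = ⊤ := by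
  have hU : ∀ x, upper x ∈ H := transvection_mem_of_isUnit _ isUnit_one hT
  set s := -B 0 0 * Ring.inverse (B 1 0)
  set C := upper s * B
  have hC₀ : C 0 0 = 0 := by
    rw [upper_mul_apply_zero_zero, mul_assoc, Ring.inverse_mul_cancel _ hB]; ring
  have hCT : C * upper 1 * C⁻¹ ∈ H := by
    have : C * upper 1 * C⁻¹ = upper s * (B * upper 1 * B⁻¹) * (upper s)⁻¹ := by
      simp only [C]; group
    rw [this]
    exact mul_mem (mul_mem (hU s) hBT) (inv_mem (hU s))
  rw [conj_upper_eq_lower C hC₀, upper_mul_apply_one_zero, mul_one] at hCT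
  exact eq_top_of_upper_mem_of_lower_mem hU
    (transvection_mem_of_isUnit _ (hB.pow 2).neg hCT)

lemma apply_one_zero_inv_mul_ne_zero {q : ℕ} [NeZero q] (f : R →+* ZMod q) (A₁ A₂ : SL(2, R))
    (hA : ∀ m : ℕ, (fun i => f ((m : R) * ((A₁ : Matrix (Fin 2) (Fin 2) R) *ᵥ ![1, 0]) i)) ≠
      fun i => f (((A₂ : Matrix (Fin 2) (Fin 2) R) *ᵥ ![1, 0]) i)) :
    f ((A₁⁻¹ * A₂) 1 0) ≠ 0 := by
  set B := A₁⁻¹ * A₂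
  intro hB
  apply hA (f (B 0 0)).val
  have hA₂ : A₂ = A₁ * B := by simp [B]
  funext i
  rw [hA₂]
  simp [Matrix.mulVec, dotProduct, Fin.sum_univ_two, Matrix.mul_apply, hB]
  ring

end Matrix.SL2

lemma ZMod.isUnit_iff_castHom_ne_zero_s4 {p r : ℕ} (hp : p.Prime) (hr : r ≠ 0) (x : ZMod (p ^ r)) :
    IsUnit x ↔ ZMod.castHom (dvd_pow_self p hr) (ZMod p) x ≠ 0 := by
  have : NeZero (p ^ r) := ⟨pow_ne_zero r hp.ne_zero⟩
  rw [ZMod.castHom_apply, ← ZMod.natCast_val, Ne, ZMod.natCast_eq_zero_iff,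
    ← Nat.Prime.coprime_iff_not_dvd hp, Nat.coprime_comm,
    ← Nat.coprime_pow_right_iff (Nat.pos_of_ne_zero hr),
    ← ZMod.isUnit_iff_coprime, ZMod.natCast_zmod_val]

lemma ZMod.isLocalRing_prime_pow {p r : ℕ} (hp : p.Prime) (hr : r ≠ 0) :
    IsLocalRing (ZMod (p ^ r)) := by
  have : Fact p.Prime := ⟨hp⟩
  have : Nontrivial (ZMod (p ^ r)) := ZMod.nontrivial_iff.2 (Nat.one_lt_pow hr hp.one_lt).ne'
  refine .of_isUnit_or_isUnit_one_sub_self fun x => ?_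
  simp only [ZMod.isUnit_iff_castHom_ne_zero_s4 hp hr, map_sub, map_one]
  by_contra! h
  rw [h.1, sub_zero] at h
  exact one_ne_zero h.2

/-- **Lemma.** Let `p` be a prime, `r ≥ 1` and `Γ ≤ SL(2, ℤ/p^rℤ)` a subgroup containing
`A₁TA₁⁻¹` and `A₂TA₂⁻¹` where for every `m ∈ ℕ` the reduction mod `p` of `m·(A₁e₁)`
differs from the reduction mod `p` of `A₂e₁`. Then `Γ = SL(2, ℤ/p^rℤ)`. -/
theorem generate_SL2_of_two_conjugates (p : ℕ) (hp : p.Prime) (r : ℕ) (hr : 1 ≤ r)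
    (Γ : Subgroup (Matrix.SpecialLinearGroup (Fin 2) (ZMod (p ^ r))))
    (A₁ A₂ : Matrix.SpecialLinearGroup (Fin 2) (ZMod (p ^ r)))
    (h₁ : A₁ * Tmod (p ^ r) * A₁⁻¹ ∈ Γ)
    (h₂ : A₂ * Tmod (p ^ r) * A₂⁻¹ ∈ Γ)
    (hA : ∀ m : ℕ,
      (fun i : Fin 2 =>
        ZMod.castHom (dvd_pow_self p (Nat.one_le_iff_ne_zero.mp hr)) (ZMod p)
          ((m : ZMod (p ^ r)) * ((A₁ : Matrix (Fin 2) (Fin 2) (ZMod (p ^ r))).mulVec ![1, 0]) i)) ≠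
      (fun i : Fin 2 =>
        ZMod.castHom (dvd_pow_self p (Nat.one_le_iff_ne_zero.mp hr)) (ZMod p)
          (((A₂ : Matrix (Fin 2) (Fin 2) (ZMod (p ^ r))).mulVec ![1, 0]) i))) :
    Γ = ⊤ := by
  have hr₀ : r ≠ 0 := Nat.one_le_iff_ne_zero.mp hr
  have : Fact p.Prime := ⟨hp⟩
  have : IsLocalRing (ZMod (p ^ r)) := ZMod.isLocalRing_prime_pow hp hr₀
  have hB : IsUnit ((A₁⁻¹ * A₂) 1 0) :=
    (ZMod.isUnit_iff_castHom_ne_zero_s4 hp hr₀ _).2 (SL2.apply_one_zero_inv_mul_ne_zero _ _ _ hA)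
  let conjA₁ := (MulAut.conj A₁).toMonoidHom
  have hΔ : Γ.comap conjA₁ = ⊤ := by
    refine SL2.eq_top_of_upper_one_mem_of_conj_mem _ hB ?_ ?_
    · simpa [conjA₁, ← SL2.Tmod_eq_upper_one] using h₁
    · simpa [conjA₁, ← SL2.Tmod_eq_upper_one, mul_assoc] using h₂
  have hsurj : Function.Surjective conjA₁ := (MulAut.conj A₁).surjective
  rw [← Subgroup.map_comap_eq_self_of_surjective hsurj Γ, hΔ]
  exact Subgroup.map_top_of_surjective _ hsurj
end

section
/- Let k ≥ 1 and l ≥ 1, and set N' = 3k + l. On the set {0, 1, …, N'−1} let σ_a be the N'-cycle (0, 1, 2, …, N'−1) and let σ_b be the product of the k disjoint 3-cycles (3i, 3i+1, 3i+2) for i = 0, …, k−1. Then the commutator σ_b⁻¹ ∘ σ_a⁻¹ ∘ σ_b ∘ σ_a is a single cycle of length 2k+1; equivalently, its cycle type (the multiset of lengths of its nontrivial cycles) is {2k+1}. -/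
/-- The 3-cycle `(a b c)` as a permutation (apply the right factor first). -/
def threeCycle {N : ℕ} (a b c : Fin N) : Equiv.Perm (Fin N) :=
  Equiv.swap a b * Equiv.swap b c

/-! Written as `(σa σb)⁻¹ (σb σa)`, the commutator sends `x` to `y` exactly when
`σa (σb y) = σb (σa x)`, so no inverse has to be computed. On the underlying naturals `σa` is
`x ↦ x + 1 mod N'` and `σb` runs through `3i → 3i+1 → 3i+2 → 3i` for `i < k`; checking this
identity pointwise shows that the commutator is the cycle
`2 → 5 → ⋯ → 3k-1 → 3k-2 → 3k-5 → ⋯ → 1 → N'-1 → 2` of length `2k + 1`, and fixes the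
multiples of `3` below `3k` together with `3k, …, N'-2`. -/

open Equiv Equiv.Perm

theorem inv_mul_eq_formPerm {α : Type*} [DecidableEq α] {P Q : Perm α} {L : List α}
    (hL : L.Nodup)
    (hcycle : ∀ (j : ℕ) (hj : j < L.length),
      Q (L[(j + 1) % L.length]'(Nat.mod_lt _ (j.zero_le.trans_lt hj))) = P L[j])
    (hfix : ∀ x ∉ L, Q x = P x) :
    Q⁻¹ * P = L.formPerm := by
  ext x
  rw [Perm.mul_apply, Perm.inv_eq_iff_eq]
  by_cases hx : x ∈ L
  · obtain ⟨j, hj, rfl⟩ := List.getElem_of_mem hx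
    rw [List.formPerm_apply_getElem _ hL, hcycle]
  · rw [List.formPerm_apply_of_notMem hx, hfix x hx]

theorem cycleType_formPerm_of_nodup {α : Type*} [DecidableEq α] [Fintype α] {L : List α}
    (hL : L.Nodup) (hlen : 2 ≤ L.length) : L.formPerm.cycleType = {L.length} := by
  have hne : ∀ x, L ≠ [x] := by
    rintro x rfl
    simp at hlen
  rw [(List.isCycle_formPerm hL hlen).cycleType, List.support_formPerm_of_nodup _ hL hne,
    List.toFinset_card_of_nodup hL]

def rotVal (N x : ℕ) : ℕ := if x + 1 < N then x + 1 else 0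

def blockVal (k x : ℕ) : ℕ := if x < 3 * k then (if x % 3 = 2 then x - 2 else x + 1) else x

theorem val_finRotate_apply (N : ℕ) (x : Fin N) : (finRotate N x).val = rotVal N x.val := by
  cases N with
  | zero => exact x.elim0
  | succ n => grind [coe_finRotate, rotVal]

theorem val_threeCycle_apply {N i : ℕ} (hi : 3 * i + 2 < N) (y : Fin N) :
    (threeCycle (⟨3 * i, by omega⟩ : Fin N) ⟨3 * i + 1, by omega⟩ ⟨3 * i + 2, hi⟩ y).val =
      if y.val / 3 = i then (if y.val % 3 = 2 then y.val - 2 else y.val + 1) else y.val := by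
  grind [threeCycle, Perm.mul_apply]

def blockThreeCycles (k N : ℕ) (hN : 3 * k ≤ N) : Perm (Fin N) :=
  ((List.finRange k).map fun i : Fin k =>
    threeCycle (⟨3 * i, by omega⟩ : Fin N) ⟨3 * i + 1, by omega⟩ ⟨3 * i + 2, by omega⟩).prod

theorem val_blockThreeCycles_apply {k N : ℕ} (hN : 3 * k ≤ N) (x : Fin N) :
    (blockThreeCycles k N hN x).val = blockVal k x.val := by
  set F : Fin k → Perm (Fin N) := fun i =>
    threeCycle (⟨3 * i, by omega⟩ : Fin N) ⟨3 * i + 1, by omega⟩ ⟨3 * i + 2, by omega⟩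
  have hF : ∀ i y, (F i y).val =
      if y.val / 3 = i then (if y.val % 3 = 2 then y.val - 2 else y.val + 1) else y.val :=
    fun i y => val_threeCycle_apply _ y
  have hdisj : ((List.finRange k).map F).Pairwise Disjoint := by
    refine List.pairwise_map.mpr ((List.nodup_finRange k).pairwise_of_forall_ne ?_)
    intro i _ j _ hij y
    rw [Fin.ext_iff, Fin.ext_iff, hF, hF]
    have : i.val ≠ j.val := Fin.val_ne_of_ne hij
    split_ifs <;> omega
  by_cases hx : x.val < 3 * k
  · rw [blockVal, if_pos hx]
    let i : Fin k := ⟨x.val / 3, by omega⟩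
    have hmem : F i ∈ (List.finRange k).map F := List.mem_map_of_mem (List.mem_finRange i)
    have hsupp : x ∈ (F i).support := by
      rw [mem_support, ne_eq, Fin.ext_iff, hF, if_pos rfl]
      split_ifs <;> omega
    rw [blockThreeCycles, ← eq_on_support_mem_disjoint hmem hdisj x hsupp, hF, if_pos rfl]
  · have hfix : ∀ f ∈ (List.finRange k).map F, f x = x := by
      simp only [List.mem_map, List.mem_finRange, true_and, forall_exists_index,
        forall_apply_eq_imp_iff]
      intro i
      have := i.isLt
      rw [Fin.ext_iff, hF, if_neg (by omega)]
    have hsupp : x ∉ (blockThreeCycles k N hN).support := fun hx => by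
      obtain ⟨f, hf, hxf⟩ := exists_mem_support_of_mem_support_prod hx
      exact mem_support.mp hxf (hfix f hf)
    rw [blockVal, if_neg hx, notMem_support.mp hsupp]

def cycleEntry (k N j : ℕ) : ℕ :=
  if j < k then 3 * j + 2 else if j < 2 * k then 3 * (2 * k - 1 - j) + 1 else N - 1

theorem cycleEntry_lt {k N : ℕ} (hN : 3 * k < N) (j : ℕ) : cycleEntry k N j < N := by
  grind [cycleEntry]

theorem cycleEntry_injOn {k N : ℕ} (hN : 3 * k < N) :
    Set.InjOn (cycleEntry k N) (Set.Iio (2 * k + 1)) := by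
  intro i hi j hj
  grind [cycleEntry]

theorem rotVal_blockVal_cycleEntry {k N : ℕ} (hN : 3 * k < N) {j : ℕ}
    (hj : j < 2 * k + 1) :
    rotVal N (blockVal k (cycleEntry k N ((j + 1) % (2 * k + 1)))) =
      blockVal k (rotVal N (cycleEntry k N j)) := by
  obtain hj | rfl := Nat.lt_or_eq_of_le (Nat.lt_succ_iff.mp hj)
  · rw [Nat.mod_eq_of_lt (by omega)]
    grind [rotVal, blockVal, cycleEntry]
  · rw [Nat.mod_self]
    grind [rotVal, blockVal, cycleEntry]

theorem rotVal_blockVal_of_forall_ne {k N x : ℕ} (hN : 3 * k < N) (hx : x < N)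
    (hne : ∀ j < 2 * k + 1, cycleEntry k N j ≠ x) :
    rotVal N (blockVal k x) = blockVal k (rotVal N x) := by
  have hupper : x % 3 = 2 → 3 * k ≤ x := fun h => by
    by_contra
    exact hne (x / 3) (by omega) (by grind [cycleEntry])
  have hlower : x % 3 = 1 → 3 * k ≤ x := fun h => by
    by_contra
    exact hne (2 * k - 1 - x / 3) (by omega) (by grind [cycleEntry])
  have hlast : x + 1 ≠ N := fun h => hne (2 * k) (by omega) (by grind [cycleEntry])
  grind [rotVal, blockVal]

def commutatorCycle (k N : ℕ) (hN : 3 * k < N) : List (Fin N) :=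
  List.ofFn fun j : Fin (2 * k + 1) => ⟨cycleEntry k N j, cycleEntry_lt hN j⟩

theorem length_commutatorCycle {k N : ℕ} (hN : 3 * k < N) :
    (commutatorCycle k N hN).length = 2 * k + 1 :=
  List.length_ofFn

theorem nodup_commutatorCycle {k N : ℕ} (hN : 3 * k < N) : (commutatorCycle k N hN).Nodup :=
  List.nodup_ofFn.mpr fun i j h =>
    Fin.ext (cycleEntry_injOn hN i.isLt j.isLt (congrArg Fin.val h))

theorem commutator_finRotate_blockThreeCycles_eq_formPerm {k N : ℕ} (hN : 3 * k < N) :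
    (finRotate N * blockThreeCycles k N hN.le)⁻¹ * (blockThreeCycles k N hN.le * finRotate N) =
      (commutatorCycle k N hN).formPerm := by
  refine inv_mul_eq_formPerm (nodup_commutatorCycle hN) (fun j hj => ?_) (fun x hx => ?_)
  · rw [length_commutatorCycle] at hj
    simp only [commutatorCycle, List.getElem_ofFn, List.length_ofFn, Perm.mul_apply, Fin.ext_iff,
      val_finRotate_apply, val_blockThreeCycles_apply]
    exact rotVal_blockVal_cycleEntry hN hj
  · simp only [Perm.mul_apply, Fin.ext_iff, val_finRotate_apply, val_blockThreeCycles_apply]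
    refine rotVal_blockVal_of_forall_ne hN x.isLt fun j hj he => hx ?_
    exact List.mem_ofFn.mpr ⟨⟨j, hj⟩, Fin.ext he⟩

/-- For `N' = 3k + l` (`k, l ≥ 1`), with `σ_a = (0 1 ⋯ N'-1)` and
`σ_b = ∏_{i<k} (3i, 3i+1, 3i+2)`, the commutator `σ_b⁻¹σ_a⁻¹σ_bσ_a` is a single cycle
of length `2k+1`, i.e. its cycle type is `{2k+1}`. -/
theorem commutator_cycleType_one_even_block (k l : ℕ) (hk : 1 ≤ k) (hl : 1 ≤ l)
    (σa σb : Equiv.Perm (Fin (3 * k + l)))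
    (ha : σa = finRotate (3 * k + l))
    (hb : σb = ((List.finRange k).map (fun (i : Fin k) =>
      threeCycle
        (⟨3 * (i : ℕ), by have := i.isLt; omega⟩ : Fin (3 * k + l))
        ⟨3 * (i : ℕ) + 1, by have := i.isLt; omega⟩
        ⟨3 * (i : ℕ) + 2, by have := i.isLt; omega⟩)).prod) :
    (σb⁻¹ * σa⁻¹ * σb * σa).cycleType = {2 * k + 1} := by
  have hN : 3 * k < 3 * k + l := by omega
  have hσb : σb = blockThreeCycles k (3 * k + l) hN.le := hb
  have hcomm : σb⁻¹ * σa⁻¹ * σb * σa = (σa * σb)⁻¹ * (σb * σa) := by group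
  rw [hcomm, ha, hσb, commutator_finRotate_blockThreeCycles_eq_formPerm hN,
    cycleType_formPerm_of_nodup (nodup_commutatorCycle hN)
      (by rw [length_commutatorCycle]; omega),
    length_commutatorCycle]
end

section
/- Let α₁, …, α_p be positive even integers and α_{p+1}, …, α_{p+2q} be positive odd integers (q ≥ 0, and p ≥ 1 if q = 0), and let l ≥ 1. With the construction described in the context (σ_a the L-cycle on {0,…,L−1} and σ_b the product of the shifted block permutations, where L = (3/2)(α₁+…+α_{p+2q}) + p + 3q + l − 1), the permutation σ_b ∘ σ_a has cycle type equal to the multiset consisting of one cycle of length L − 4q together with 2q cycles of length 2. -/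
namespace Origami

/-- The element of `Fin L` (for `L > 0`) corresponding to the natural number `a`
(which in our uses is always `< L`). -/
def mkFin (L : ℕ) (hL : 0 < L) (a : ℕ) : Fin L := ⟨a % L, Nat.mod_lt a hL⟩

/-- The 3-cycle `(a b c)` on `Fin L` (apply the right factor first). -/
def tcyc (L : ℕ) (hL : 0 < L) (a b c : ℕ) : Equiv.Perm (Fin L) :=
  Equiv.swap (mkFin L hL a) (mkFin L hL b) * Equiv.swap (mkFin L hL b) (mkFin L hL c)

/-- The 5-cycle `(a b c d e)` on `Fin L` (apply the right factor first). -/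
def fcyc (L : ℕ) (hL : 0 < L) (a b c d e : ℕ) : Equiv.Perm (Fin L) :=
  Equiv.swap (mkFin L hL a) (mkFin L hL b) * Equiv.swap (mkFin L hL b) (mkFin L hL c) *
    Equiv.swap (mkFin L hL c) (mkFin L hL d) * Equiv.swap (mkFin L hL d) (mkFin L hL e)

/-- The block permutation for an even `α = 2k`, starting at offset `S`:
the product of the 3-cycles `(S+3i, S+3i+1, S+3i+2)` for `i < k`. -/
def evenBlock (L : ℕ) (hL : 0 < L) (S k : ℕ) : Equiv.Perm (Fin L) :=
  ((List.range k).map (fun i => tcyc L hL (S + 3 * i) (S + 3 * i + 1) (S + 3 * i + 2))).prod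

/-- The block permutation for a pair of odds `α = 2k₁+1`, `α' = 2k₂+1`, starting at
offset `S`: the 3-cycles `(S+3i, S+3i+1, S+3i+2)` for `i < k₁`, the 5-cycle
`(S+3k₁, S+3k₁+4, S+3k₁+1, S+3k₁+2, S+3k₁+3)`, and the 3-cycles
`(S+3k₁+5+3j, S+3k₁+6+3j, S+3k₁+7+3j)` for `j < k₂`. -/
def oddBlock (L : ℕ) (hL : 0 < L) (S k₁ k₂ : ℕ) : Equiv.Perm (Fin L) :=
  evenBlock L hL S k₁ *
    fcyc L hL (S + 3 * k₁) (S + 3 * k₁ + 4) (S + 3 * k₁ + 1) (S + 3 * k₁ + 2) (S + 3 * k₁ + 3) *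
    evenBlock L hL (S + 3 * k₁ + 5) k₂

/-- The width of the `j`-th block (`j < p`: the even block for `αⱼ`, of width `(3/2)αⱼ + 1`,
or `(3/2)α_{p-1} + l` for the last block when `q = 0`; `p ≤ j < p+q`: the block for the pair of
odd numbers `(α_{p+2(j-p)}, α_{p+2(j-p)+1})`, of width `(3/2)(α+α') + 3`, or `(3/2)(α+α') + 2 + l`
for the last block). -/
def width (p q l : ℕ) (α : Fin (p + 2 * q) → ℕ) (j : ℕ) : ℕ :=
  if hj : j < p then
    3 * (α ⟨j, by omega⟩ / 2) + (if q = 0 ∧ j = p - 1 then l else 1)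
  else if hj' : j < p + q then
    3 * (α ⟨p + 2 * (j - p), by omega⟩ / 2) + 3 * (α ⟨p + 2 * (j - p) + 1, by omega⟩ / 2) +
      (if j = p + q - 1 then 5 + l else 6)
  else 0

/-- The shift (start offset) of the `j`-th block: the total width of the preceding blocks. -/
def shift (p q l : ℕ) (α : Fin (p + 2 * q) → ℕ) (j : ℕ) : ℕ :=
  ∑ i ∈ Finset.range j, width p q l α i

/-- The horizontal gluing permutation `σ_b` of the one-cylinder origami in the stratum
`H(α₁, …, α_{p+2q})`: the product of the shifted block permutations of the even blocks for
`α₁, …, α_p` followed by the blocks for the pairs `(α_{p+1}, α_{p+2}), …`. -/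
def sigmaB (L : ℕ) (hL : 0 < L) (p q l : ℕ) (α : Fin (p + 2 * q) → ℕ) : Equiv.Perm (Fin L) :=
  ((List.range (p + q)).map (fun j =>
    if hj : j < p then
      evenBlock L hL (shift p q l α j) (α ⟨j, by omega⟩ / 2)
    else if hj' : j < p + q then
      oddBlock L hL (shift p q l α j)
        (α ⟨p + 2 * (j - p), by omega⟩ / 2) (α ⟨p + 2 * (j - p) + 1, by omega⟩ / 2)
    else 1)).prod

end Origami

/-!
Write `σ_a = finRotate L` as the cycle `formPerm [0, 1, …, L-1]` and cut this list into the runs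
on which the factors of `σ_b` are supported. Multiplying a cycle on the left by the 3-cycle
`(a, a+1, a+2)` of three consecutive entries only swaps `a` and `a+1` in the list; multiplying it
by the 5-cycle `(m, m+4, m+1, m+2, m+3)` of five consecutive entries deletes `m, …, m+3` from the
list and splits off the transpositions `(m, m+2)` and `(m+1, m+3)`. The factors act on disjoint
runs, so they can be absorbed one at a time: `σ_b σ_a` is a cycle through `L - 4q` points times
`2q` transpositions of the remaining `4q` points.
-/

theorem Finset.sum_range_two_mul {M : Type*} [AddCommMonoid M] (f : ℕ → M) (n : ℕ) :
    ∑ i ∈ Finset.range (2 * n), f i = ∑ i ∈ Finset.range n, (f (2 * i) + f (2 * i + 1)) := by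
  induction n with
  | zero => simp
  | succ n ih =>
    rw [show 2 * (n + 1) = 2 * n + 1 + 1 by ring, Finset.sum_range_succ, Finset.sum_range_succ,
      ih, Finset.sum_range_succ, add_assoc]

namespace List

variable {α : Type*}

theorem Subperm.nodup {l₁ l₂ : List α} (h : l₁ <+~ l₂) (hl : l₂.Nodup) : l₁.Nodup := by
  obtain ⟨l, hp, hs⟩ := h
  exact hp.nodup_iff.1 (hs.nodup hl)

/-- `y` is the cyclic predecessor of the middle segment `zs` in `xs ++ zs ++ ys`. -/
theorem exists_isRotated_cons {xs ys : List α} (h : xs ++ ys ≠ []) :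
    ∃ y ws, ∀ zs, xs ++ zs ++ ys ~r y :: (zs ++ ws) := by
  obtain ⟨ws, y, hw⟩ := (eq_nil_or_concat' (ys ++ xs)).resolve_left fun h' => h (by simp_all)
  refine ⟨y, ws, fun zs => ?_⟩
  have h₁ : xs ++ (zs ++ ys) ~r (zs ++ ws) ++ [y] := by
    simpa only [append_assoc, hw] using isRotated_append (l := xs) (l' := zs ++ ys)
  exact (append_assoc xs zs ys ▸ h₁).trans isRotated_append

theorem length_flatMap_pair (ps : List (α × α)) :
    (ps.flatMap fun p => [p.1, p.2]).length = 2 * ps.length := by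
  induction ps <;> simp [*]; ring

theorem flatMap_pair_map_prodMap {β : Type*} (f : α → β) (ps : List (α × α)) :
    (ps.map (Prod.map f f)).flatMap (fun p => [p.1, p.2]) =
      (ps.flatMap fun p => [p.1, p.2]).map f := by
  induction ps <;> simp [*]

variable [DecidableEq α]

theorem commute_formPerm_of_forall_apply_eq {f : Equiv.Perm α} {l : List α}
    (h : ∀ x ∈ l, f x = x) : Commute f (formPerm l) := by
  ext x
  simp only [Equiv.Perm.mul_apply]
  by_cases hx : x ∈ l
  · rw [h x hx, h _ (formPerm_apply_mem_of_mem hx)]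
  · have hfx : f x ∉ l := fun hm => hx (f.injective (h _ hm) ▸ hm)
    rw [formPerm_apply_of_notMem hx, formPerm_apply_of_notMem hfx]

theorem swap_mul_swap_mul_formPerm {xs ys : List α} {a b c : α} (hxy : xs ++ ys ≠ [])
    (hnd : (xs ++ [a, b, c] ++ ys).Nodup) :
    Equiv.swap a b * Equiv.swap b c * formPerm (xs ++ [a, b, c] ++ ys) =
      formPerm (xs ++ [b, a, c] ++ ys) := by
  obtain ⟨y, ws, hrot⟩ := exists_isRotated_cons hxy
  have hnd' : (xs ++ [b, a, c] ++ ys).Nodup :=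
    (((Perm.swap b a [c]).append_left xs).append_right ys).nodup_iff.1 hnd
  have hyabc : [y, a, b, c].Nodup := ((hrot _).nodup_iff.1 hnd).sublist (by simp)
  have key : Equiv.swap a b * Equiv.swap b c * Equiv.swap y a * Equiv.swap a b * Equiv.swap b c =
      Equiv.swap y b * Equiv.swap b a * Equiv.swap a c := by
    ext z
    simp only [nodup_cons, mem_cons, not_mem_nil] at hyabc
    simp only [Equiv.Perm.mul_apply, Equiv.swap_apply_def]
    grind
  rw [formPerm_eq_of_isRotated hnd (hrot _), formPerm_eq_of_isRotated hnd' (hrot _)]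
  simp only [cons_append, nil_append, formPerm_cons_cons, ← mul_assoc, key]

theorem swap_mul_swap_mul_swap_mul_swap_mul_formPerm {xs ys : List α} {a b c d e : α}
    (hxy : xs ++ ys ≠ []) (hnd : (xs ++ [a, b, c, d, e] ++ ys).Nodup) :
    Equiv.swap a e * Equiv.swap e b * Equiv.swap b c * Equiv.swap c d *
        formPerm (xs ++ [a, b, c, d, e] ++ ys) =
      formPerm (xs ++ [e] ++ ys) * (Equiv.swap a c * Equiv.swap b d) := by
  obtain ⟨y, ws, hrot⟩ := exists_isRotated_cons hxy
  have hnd' : (xs ++ [e] ++ ys).Nodup :=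
    hnd.sublist (((sublist_append_right [a, b, c, d] [e]).append_left xs).append_right ys)
  have hnd₁ := (hrot _).nodup_iff.1 hnd
  have key : Equiv.swap a e * Equiv.swap e b * Equiv.swap b c * Equiv.swap c d * Equiv.swap y a *
      Equiv.swap a b * Equiv.swap b c * Equiv.swap c d * Equiv.swap d e =
      Equiv.swap y e * Equiv.swap a c * Equiv.swap b d := by
    have h := hnd₁.sublist (l₁ := [y, a, b, c, d, e]) (by simp)
    ext z
    simp only [nodup_cons, mem_cons, not_mem_nil] at h
    simp only [Equiv.Perm.mul_apply, Equiv.swap_apply_def]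
    grind
  have hcomm : Commute (Equiv.swap a c * Equiv.swap b d) (formPerm (e :: ws)) := by
    have hdisj := disjoint_of_nodup_append (l₁ := [a, b, c, d]) (l₂ := e :: ws)
      (by simpa using (nodup_cons.1 hnd₁).2)
    refine commute_formPerm_of_forall_apply_eq fun x hx => ?_
    have hx' := fun hm => hdisj hm hx
    simp only [mem_cons, not_mem_nil, or_false] at hx'
    simp only [Equiv.Perm.mul_apply, Equiv.swap_apply_def]
    grind
  rw [formPerm_eq_of_isRotated hnd (hrot _), formPerm_eq_of_isRotated hnd' (hrot _)]
  simp only [cons_append, nil_append, formPerm_cons_cons, ← mul_assoc, key]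
  simp only [mul_assoc]
  rw [← hcomm.eq, mul_assoc]

def swapProd (ps : List (α × α)) : Equiv.Perm α := (ps.map fun p => Equiv.swap p.1 p.2).prod

@[simp] theorem swapProd_nil : swapProd ([] : List (α × α)) = 1 := rfl

@[simp] theorem swapProd_cons (p : α × α) (ps : List (α × α)) :
    swapProd (p :: ps) = Equiv.swap p.1 p.2 * swapProd ps := rfl

theorem swapProd_append (ps qs : List (α × α)) :
    swapProd (ps ++ qs) = swapProd ps * swapProd qs := by
  simp [swapProd]

theorem swapProd_apply_of_notMem {ps : List (α × α)} {x : α}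
    (hx : x ∉ ps.flatMap fun p => [p.1, p.2]) : swapProd ps x = x := by
  induction ps with
  | nil => rfl
  | cons p ps ih =>
    simp only [flatMap_cons, cons_append, nil_append, mem_cons, not_or] at hx
    rw [swapProd_cons, Equiv.Perm.mul_apply, ih hx.2.2,
      Equiv.swap_apply_of_ne_of_ne hx.1 hx.2.1]

theorem cycleType_swapProd [Fintype α] {ps : List (α × α)}
    (hnd : (ps.flatMap fun p => [p.1, p.2]).Nodup) :
    (swapProd ps).cycleType = Multiset.replicate ps.length 2 := by
  induction ps with
  | nil => simp
  | cons p ps ih =>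
    simp only [flatMap_cons, cons_append, nil_append, nodup_cons, mem_cons, not_or] at hnd
    obtain ⟨⟨hne, h₁⟩, h₂, hnd⟩ := hnd
    have hdisj : (Equiv.swap p.1 p.2).Disjoint (swapProd ps) := fun x => by
      by_cases hx : x = p.1 ∨ x = p.2
      · rcases hx with rfl | rfl
        · exact .inr (swapProd_apply_of_notMem h₁)
        · exact .inr (swapProd_apply_of_notMem h₂)
      · push Not at hx
        exact .inl (Equiv.swap_apply_of_ne_of_ne hx.1 hx.2)
    rw [swapProd_cons, hdisj.cycleType_mul, ih hnd,
      Equiv.Perm.isSwap_iff_cycleType.1 ⟨_, _, hne, rfl⟩, length_cons, Multiset.replicate_succ,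
      Multiset.singleton_add]

theorem cycleType_formPerm_mul_swapProd [Fintype α] {l : List α} {ps : List (α × α)}
    (hnd : (l ++ ps.flatMap fun p => [p.1, p.2]).Nodup) (hl : 2 ≤ l.length) :
    (formPerm l * swapProd ps).cycleType = l.length ::ₘ Multiset.replicate ps.length 2 := by
  have hdisj : (formPerm l).Disjoint (swapProd ps) := fun x => by
    by_cases hx : x ∈ l
    · exact .inr (swapProd_apply_of_notMem (disjoint_of_nodup_append hnd hx))
    · exact .inl (formPerm_apply_of_notMem hx)
  have hl' : ∀ x, l ≠ [x] := fun x h => by simp [h] at hl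
  rw [hdisj.cycleType_mul, (isCycle_formPerm hnd.of_append_left hl).cycleType,
    support_formPerm_of_nodup _ hnd.of_append_left hl', toFinset_card_of_nodup hnd.of_append_left,
    cycleType_swapProd hnd.of_append_right, Multiset.singleton_add]

theorem prod_mul_formPerm_flatMap {n : ℕ} {β : ℕ → Equiv.Perm α} {B T : ℕ → List α}
    {P : ℕ → List (α × α)}
    (hβ : ∀ j < n, ∀ xs ys, (xs ++ B j ++ ys).Nodup →
      β j * formPerm (xs ++ B j ++ ys) = formPerm (xs ++ T j ++ ys) * swapProd (P j))
    (hT : ∀ j < n, T j <+~ B j) {ys : List α} (hnd : ((range n).flatMap B ++ ys).Nodup) :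
    ((range n).map β).prod * formPerm ((range n).flatMap B ++ ys) =
      formPerm ((range n).flatMap T ++ ys) * swapProd ((range n).flatMap P) := by
  induction n generalizing ys with
  | zero => simp
  | succ n ih =>
    simp only [range_succ, flatMap_append, flatMap_singleton, map_append, prod_append,
      map_singleton, prod_singleton, swapProd_append] at hnd ⊢
    have hnd' : ((range n).flatMap B ++ (T n ++ ys)).Nodup := by
      rw [← append_assoc]
      exact (((Subperm.refl _).append (hT n n.lt_add_one)).append (Subperm.refl ys)).nodup hnd
    rw [mul_assoc, hβ n n.lt_add_one _ _ hnd, ← mul_assoc, append_assoc,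
      ih (fun j hj => hβ j (by omega)) (fun j hj => hT j (by omega)) hnd', ← mul_assoc,
      append_assoc]

end List

theorem finRotate_eq_formPerm_finRange (n : ℕ) : finRotate n = (List.finRange n).formPerm := by
  ext ⟨i, hi⟩
  have h := List.formPerm_apply_getElem _ (List.nodup_finRange n) i (by simpa using hi)
  simp only [List.getElem_finRange, Fin.cast_mk, List.length_finRange] at h
  simp [h, finRotate_apply, Fin.val_add]

namespace Origami

open Equiv List

/-- The route of the long cycle through a run of `k` triples starting at `S`. -/
def tripleTrace : ℕ → ℕ → List ℕ
  | _, 0 => []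
  | S, k + 1 => (S + 1) :: S :: (S + 2) :: tripleTrace (S + 3) k

theorem range'_three_mul_succ (S k : ℕ) :
    range' S (3 * (k + 1)) = S :: (S + 1) :: (S + 2) :: range' (S + 3) (3 * k) := by
  rw [show 3 * (k + 1) = 3 * k + 2 + 1 by ring]
  simp [range'_succ, add_assoc]

theorem tripleTrace_perm (S k : ℕ) : tripleTrace S k ~ range' S (3 * k) := by
  induction k generalizing S with
  | zero => simp [tripleTrace]
  | succ k ih =>
    rw [tripleTrace, range'_three_mul_succ]
    exact (((ih (S + 3)).cons _).cons _).cons _ |>.trans (.swap _ _ _)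

def evenTrace (S k e : ℕ) : List ℕ := tripleTrace S k ++ range' (S + 3 * k) e

def oddTrace (S k₁ k₂ e : ℕ) : List ℕ :=
  tripleTrace S k₁ ++ (S + 3 * k₁ + 4) :: tripleTrace (S + 3 * k₁ + 5) k₂ ++
    range' (S + 3 * k₁ + 5 + 3 * k₂) e

def oddSwaps (m : ℕ) : List (ℕ × ℕ) := [(m, m + 2), (m + 1, m + 3)]

theorem evenTrace_perm (S k e : ℕ) : evenTrace S k e ~ range' S (3 * k + e) := by
  rw [evenTrace, ← range'_append, one_mul]
  exact (tripleTrace_perm S k).append_right _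

theorem oddTrace_append_perm (S k₁ k₂ e : ℕ) :
    oddTrace S k₁ k₂ e ++ (oddSwaps (S + 3 * k₁)).flatMap (fun p => [p.1, p.2]) ~
      range' S (3 * k₁ + 5 + 3 * k₂ + e) := by
  have hsplit : range' S (3 * k₁ + 5 + 3 * k₂ + e) = range' S (3 * k₁) ++
      ([S + 3 * k₁, S + 3 * k₁ + 1, S + 3 * k₁ + 2, S + 3 * k₁ + 3, S + 3 * k₁ + 4] ++
        (range' (S + 3 * k₁ + 5) (3 * k₂) ++ range' (S + 3 * k₁ + 5 + 3 * k₂) e)) := by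
    rw [show 3 * k₁ + 5 + 3 * k₂ + e = 3 * k₁ + (5 + (3 * k₂ + e)) by ring, ← range'_append,
      ← range'_append (m := 5), ← range'_append (m := 3 * k₂)]
    simp [range'_succ, add_assoc]
  rw [hsplit, oddTrace, oddSwaps]
  generalize S + 3 * k₁ = m
  simp only [flatMap_cons, flatMap_nil, append_assoc, cons_append, nil_append, append_nil]
  refine (tripleTrace_perm S k₁).append ?_
  have hfive : (m + 4) :: [m, m + 2, m + 1, m + 3] ~ [m, m + 1, m + 2, m + 3, m + 4] :=
    (perm_append_singleton _ _).symm.trans ((Perm.swap _ _ _).cons m)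
  rw [← append_assoc]
  exact (perm_append_comm.cons _).trans
    (hfive.append ((tripleTrace_perm _ _).append_right _))

theorem map_mkFin_range {L : ℕ} (hL : 0 < L) : (range L).map (mkFin L hL) = finRange L :=
  ext_getElem (by simp) fun i h₁ _ => by simp [mkFin, Nat.mod_eq_of_lt (by simpa using h₁ : i < L)]

section Block

variable {L : ℕ} (hL : 0 < L)

local notation "⌞" l "⌟" => List.map (mkFin L hL) l

theorem evenBlock_succ (S k : ℕ) :
    evenBlock L hL S (k + 1) = tcyc L hL S (S + 1) (S + 2) * evenBlock L hL (S + 3) k := by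
  simp only [evenBlock, range_succ_eq_map, map_cons, map_map, prod_cons, mul_zero, add_zero]
  congr 2
  refine map_congr_left fun i _ => ?_
  simp only [Function.comp_apply]
  congr 1 <;> omega

theorem evenBlock_mul_formPerm (S k : ℕ) {xs ys : List (Fin L)} (hxy : xs ++ ys ≠ [])
    (hnd : (xs ++ ⌞range' S (3 * k)⌟ ++ ys).Nodup) :
    evenBlock L hL S k * formPerm (xs ++ ⌞range' S (3 * k)⌟ ++ ys) =
      formPerm (xs ++ ⌞tripleTrace S k⌟ ++ ys) := by
  induction k generalizing S xs with
  | zero => simp [evenBlock, tripleTrace]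
  | succ k ih =>
    have hsplit : xs ++ ⌞range' S (3 * (k + 1))⌟ ++ ys =
        xs ++ ⌞[S, S + 1, S + 2]⌟ ++ ⌞range' (S + 3) (3 * k)⌟ ++ ys := by
      simp [range'_three_mul_succ]
    have hperm : ⌞[S, S + 1, S + 2]⌟ ++ ⌞tripleTrace (S + 3) k⌟ ~ ⌞range' S (3 * (k + 1))⌟ := by
      rw [range'_three_mul_succ]
      exact ((((tripleTrace_perm _ _).cons _).cons _).cons _).map _
    have hnd' : (xs ++ ⌞[S, S + 1, S + 2]⌟ ++ (⌞tripleTrace (S + 3) k⌟ ++ ys)).Nodup := by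
      rw [← append_assoc, append_assoc xs]
      exact ((hperm.append_left xs).append_right ys).nodup_iff.2 hnd
    rw [evenBlock_succ, mul_assoc, hsplit, ih (S + 3) (by simp) (hsplit ▸ hnd),
      append_assoc _ _ ys]
    simp only [map_cons, map_nil] at hnd' ⊢
    rw [tcyc, swap_mul_swap_mul_formPerm (by simp_all) hnd']
    simp [tripleTrace]

theorem oddBlock_mul_formPerm (S k₁ k₂ : ℕ) {xs ys : List (Fin L)} (hxy : xs ++ ys ≠ [])
    (hnd : (xs ++ ⌞range' S (3 * k₁ + 5 + 3 * k₂)⌟ ++ ys).Nodup) :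
    oddBlock L hL S k₁ k₂ * formPerm (xs ++ ⌞range' S (3 * k₁ + 5 + 3 * k₂)⌟ ++ ys) =
      formPerm
          (xs ++ ⌞tripleTrace S k₁ ++ (S + 3 * k₁ + 4) :: tripleTrace (S + 3 * k₁ + 5) k₂⌟ ++ ys) *
        (swap (mkFin L hL (S + 3 * k₁)) (mkFin L hL (S + 3 * k₁ + 2)) *
          swap (mkFin L hL (S + 3 * k₁ + 1)) (mkFin L hL (S + 3 * k₁ + 3))) := by
  have hsplit : range' S (3 * k₁ + 5 + 3 * k₂) = range' S (3 * k₁) ++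
      [S + 3 * k₁, S + 3 * k₁ + 1, S + 3 * k₁ + 2, S + 3 * k₁ + 3, S + 3 * k₁ + 4] ++
        range' (S + 3 * k₁ + 5) (3 * k₂) := by
    rw [← range'_append (m := 3 * k₁ + 5), ← range'_append (m := 3 * k₁)]
    simp [range'_succ, add_assoc]
  simp only [hsplit, map_append, ← append_assoc] at hnd ⊢
  rw [oddBlock, fcyc, mul_assoc, mul_assoc, evenBlock_mul_formPerm hL _ _ (by simp) hnd]
  generalize S + 3 * k₁ = m at hnd ⊢
  have hnd₁ := ((((tripleTrace_perm (m + 5) k₂).map (mkFin L hL)).append_left _).append_right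
    ys).nodup_iff.2 hnd
  simp only [map_cons, map_nil] at hnd₁ ⊢
  rw [append_assoc _ _ ys] at hnd₁ ⊢
  have hnd₂ : (xs ++ ⌞range' S (3 * k₁)⌟ ++ ([mkFin L hL (m + 4)] ++
      (⌞tripleTrace (m + 5) k₂⌟ ++ ys))).Nodup := by
    simp only [append_assoc, cons_append, nil_append] at hnd₁ ⊢
    exact hnd₁.sublist (((Sublist.refl _).cons _ |>.cons _ |>.cons _ |>.cons _).append_left _
      |>.append_left _)
  rw [swap_mul_swap_mul_swap_mul_swap_mul_formPerm (by simp_all) hnd₁, ← mul_assoc,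
    append_assoc (xs ++ _), evenBlock_mul_formPerm hL _ _ (by simp) hnd₂]
  simp

theorem evenBlock_mul_formPerm_evenTrace {S k e : ℕ} (he : 0 < e) {xs ys : List (Fin L)}
    (hnd : (xs ++ ⌞range' S (3 * k + e)⌟ ++ ys).Nodup) :
    evenBlock L hL S k * formPerm (xs ++ ⌞range' S (3 * k + e)⌟ ++ ys) =
      formPerm (xs ++ ⌞evenTrace S k e⌟ ++ ys) := by
  rw [← range'_append, one_mul, map_append, ← append_assoc, append_assoc] at hnd ⊢
  rw [evenBlock_mul_formPerm hL S k (by simp; omega) hnd, evenTrace]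
  simp

theorem oddBlock_mul_formPerm_oddTrace {S k₁ k₂ e : ℕ} (he : 0 < e) {xs ys : List (Fin L)}
    (hnd : (xs ++ ⌞range' S (3 * k₁ + 5 + 3 * k₂ + e)⌟ ++ ys).Nodup) :
    oddBlock L hL S k₁ k₂ * formPerm (xs ++ ⌞range' S (3 * k₁ + 5 + 3 * k₂ + e)⌟ ++ ys) =
      formPerm (xs ++ ⌞oddTrace S k₁ k₂ e⌟ ++ ys) *
        swapProd ((oddSwaps (S + 3 * k₁)).map (Prod.map (mkFin L hL) (mkFin L hL))) := by
  rw [← range'_append, one_mul, map_append, ← append_assoc, append_assoc] at hnd ⊢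
  rw [oddBlock_mul_formPerm hL S k₁ k₂ (by simp; omega) hnd, oddTrace, oddSwaps]
  simp [add_assoc]

end Block

section Construction

variable (p q l : ℕ) (α : Fin (p + 2 * q) → ℕ)

def alpha (i : ℕ) : ℕ := if h : i < p + 2 * q then α ⟨i, h⟩ else 0

def tailLen (j : ℕ) : ℕ := if j = p + q - 1 then l else 1

def blockPerm (L : ℕ) (hL : 0 < L) (j : ℕ) : Equiv.Perm (Fin L) :=
  if hj : j < p then
    evenBlock L hL (shift p q l α j) (α ⟨j, by omega⟩ / 2)
  else if hj' : j < p + q then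
    oddBlock L hL (shift p q l α j)
      (α ⟨p + 2 * (j - p), by omega⟩ / 2) (α ⟨p + 2 * (j - p) + 1, by omega⟩ / 2)
  else 1

def blockTrace (j : ℕ) : List ℕ :=
  if j < p then evenTrace (shift p q l α j) (alpha p q α j / 2) (tailLen p q l j)
  else oddTrace (shift p q l α j) (alpha p q α (p + 2 * (j - p)) / 2)
    (alpha p q α (p + 2 * (j - p) + 1) / 2) (tailLen p q l j)

def blockSwaps (j : ℕ) : List (ℕ × ℕ) :=
  if j < p then [] else oddSwaps (shift p q l α j + 3 * (alpha p q α (p + 2 * (j - p)) / 2))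

def longCycle : List ℕ := (range (p + q)).flatMap (blockTrace p q l α)

def twoCycles : List (ℕ × ℕ) := (range (p + q)).flatMap (blockSwaps p q l α)

theorem sigmaB_eq_prod_blockPerm (L : ℕ) (hL : 0 < L) :
    sigmaB L hL p q l α = ((range (p + q)).map (blockPerm p q l α L hL)).prod := rfl

variable {p q l α}

theorem width_of_lt {j : ℕ} (hj : j < p) :
    width p q l α j = 3 * (alpha p q α j / 2) + tailLen p q l j := by
  simp only [width, alpha, tailLen, dif_pos hj, dif_pos (show j < p + 2 * q by omega)]
  split_ifs <;> omega

theorem width_of_ge {j : ℕ} (hj : p ≤ j) (hj' : j < p + q) :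
    width p q l α j = 3 * (alpha p q α (p + 2 * (j - p)) / 2) + 5 +
      3 * (alpha p q α (p + 2 * (j - p) + 1) / 2) + tailLen p q l j := by
  simp only [width, alpha, tailLen, dif_neg (show ¬j < p by omega), dif_pos hj',
    dif_pos (show p + 2 * (j - p) < p + 2 * q by omega),
    dif_pos (show p + 2 * (j - p) + 1 < p + 2 * q by omega)]
  split_ifs <;> omega

theorem blockTrace_append_perm {j : ℕ} (hj : j < p + q) :
    blockTrace p q l α j ++ (blockSwaps p q l α j).flatMap (fun p => [p.1, p.2]) ~
      range' (shift p q l α j) (width p q l α j) := by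
  by_cases hjp : j < p
  · simpa [blockTrace, blockSwaps, hjp, width_of_lt hjp] using evenTrace_perm _ _ _
  · simpa only [blockTrace, blockSwaps, hjp, if_false, width_of_ge (not_lt.1 hjp) hj]
      using oddTrace_append_perm _ _ _ _

theorem flatMap_range_range'_shift (n : ℕ) :
    (range n).flatMap (fun j => range' (shift p q l α j) (width p q l α j)) =
      range' 0 (shift p q l α n) := by
  induction n with
  | zero => simp [shift]
  | succ n ih =>
    have hs : shift p q l α (n + 1) = shift p q l α n + width p q l α n :=
      Finset.sum_range_succ _ _
    rw [range_succ, flatMap_append, ih, flatMap_singleton, hs]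
    simpa using range'_append (s := 0) (m := shift p q l α n) (n := width p q l α n) (step := 1)

theorem sum_eq_sum_alpha :
    ∑ i, α i = ∑ j ∈ Finset.range p, alpha p q α j +
      ∑ t ∈ Finset.range q, (alpha p q α (p + 2 * t) + alpha p q α (p + 2 * t + 1)) := by
  have h : ∑ i, α i = ∑ i ∈ Finset.range (p + 2 * q), alpha p q α i := by
    rw [← Fin.sum_univ_eq_sum_range]
    simp [alpha]
  rw [h, Finset.sum_range_add, Finset.sum_range_two_mul]
  rfl

theorem sum_tailLen (hpq : 1 ≤ p + q) :
    ∑ j ∈ Finset.range (p + q), tailLen p q l j = p + q - 1 + l := by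
  obtain ⟨n, hn⟩ : ∃ n, p + q = n + 1 := ⟨p + q - 1, by omega⟩
  have h1 : ∀ j ∈ Finset.range n, tailLen p q l j = 1 := fun j hj => by
    unfold tailLen; exact if_neg (by simp at hj; omega)
  rw [hn, Finset.sum_range_succ, Finset.sum_congr rfl h1]
  simp [tailLen, hn]

theorem two_mul_width_of_lt (hEven : ∀ i : Fin (p + 2 * q), (i : ℕ) < p → Even (α i)) {j : ℕ}
    (hj : j < p) : 2 * width p q l α j = 3 * alpha p q α j + 2 * tailLen p q l j := by
  have h := Nat.two_mul_div_two_of_even (n := alpha p q α j)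
    (by simpa [alpha, show j < p + 2 * q by omega] using hEven ⟨j, by omega⟩ hj)
  rw [width_of_lt hj]
  omega

theorem two_mul_width_add (hOdd : ∀ i : Fin (p + 2 * q), p ≤ (i : ℕ) → Odd (α i)) {t : ℕ}
    (ht : t < q) : 2 * width p q l α (p + t) = 3 * (alpha p q α (p + 2 * t) +
      alpha p q α (p + 2 * t + 1)) + 4 + 2 * tailLen p q l (p + t) := by
  have h₁ := Nat.two_mul_div_two_add_one_of_odd (n := alpha p q α (p + 2 * t))
    (by simpa [alpha, show p + 2 * t < p + 2 * q by omega] using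
      hOdd ⟨p + 2 * t, by omega⟩ (by simp))
  have h₂ := Nat.two_mul_div_two_add_one_of_odd (n := alpha p q α (p + 2 * t + 1))
    (by simpa [alpha, show p + 2 * t + 1 < p + 2 * q by omega] using
      hOdd ⟨p + 2 * t + 1, by omega⟩ (by simp; omega))
  rw [width_of_ge (by omega) (by omega), Nat.add_sub_cancel_left]
  omega

theorem shift_add_eq (hl : 1 ≤ l) (hpq : q = 0 → 1 ≤ p)
    (hEven : ∀ i : Fin (p + 2 * q), (i : ℕ) < p → Even (α i))
    (hOdd : ∀ i : Fin (p + 2 * q), p ≤ (i : ℕ) → Odd (α i)) :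
    shift p q l α (p + q) = 3 * (∑ i, α i) / 2 + p + 3 * q + l - 1 := by
  have hpq' : 1 ≤ p + q := by omega
  have h2 : 2 * shift p q l α (p + q) =
      3 * (∑ i, α i) + 2 * ∑ j ∈ Finset.range (p + q), tailLen p q l j + 4 * q := by
    rw [shift, Finset.mul_sum, Finset.sum_range_add, Finset.sum_range_add, sum_eq_sum_alpha,
      Finset.sum_congr rfl fun j hj => two_mul_width_of_lt hEven (Finset.mem_range.1 hj),
      Finset.sum_congr rfl fun t ht => two_mul_width_add hOdd (Finset.mem_range.1 ht)]
    simp only [Finset.sum_add_distrib, ← Finset.mul_sum, Finset.sum_const, Finset.card_range,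
      smul_eq_mul]
    ring
  rw [sum_tailLen hpq'] at h2
  omega

theorem four_mul_add_two_le (hl : 1 ≤ l) (hpq : q = 0 → 1 ≤ p) (hpos : ∀ i, 0 < α i) :
    4 * q + 2 ≤ 3 * (∑ i, α i) / 2 + p + 3 * q + l - 1 := by
  have h : p + 2 * q ≤ ∑ i, α i := by
    simpa using Finset.card_nsmul_le_sum Finset.univ (fun i => α i) 1 fun i _ => hpos i
  rcases Nat.eq_zero_or_pos q with rfl | hq
  · have := hpq rfl; omega
  · omega

theorem length_twoCycles : (twoCycles p q l α).length = 2 * q := by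
  have h₁ : (range p).flatMap (blockSwaps p q l α) = [] :=
    flatMap_eq_nil_iff.2 fun j hj => by simp [blockSwaps, mem_range.1 hj]
  have h₂ : ∀ t, (blockSwaps p q l α (p + t)).length = 2 := fun t => by
    simp [blockSwaps, oddSwaps]
  rw [twoCycles, range_add, flatMap_append, length_append, h₁, flatMap_map, length_flatMap]
  simp [h₂, mul_comm]

theorem longCycle_append_perm :
    longCycle p q l α ++ (twoCycles p q l α).flatMap (fun p => [p.1, p.2]) ~
      range' 0 (shift p q l α (p + q)) := by
  rw [longCycle, twoCycles, flatMap_assoc, ← flatMap_range_range'_shift]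
  exact (flatMap_append_perm _ _ _).trans
    (Perm.flatMap_left _ fun j hj => blockTrace_append_perm (mem_range.1 hj))

theorem length_longCycle : (longCycle p q l α).length + 4 * q = shift p q l α (p + q) := by
  have h := (longCycle_append_perm (p := p) (q := q) (l := l) (α := α)).length_eq
  rw [length_append, length_flatMap_pair, length_twoCycles, length_range'] at h
  omega

end Construction

section Assembly

variable {p q l : ℕ} {α : Fin (p + 2 * q) → ℕ} {L : ℕ} (hL : 0 < L)

local notation "⌞" l "⌟" => List.map (mkFin L hL) l

theorem blockPerm_mul_formPerm (hl : 1 ≤ l) {j : ℕ} (hj : j < p + q) {xs ys : List (Fin L)}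
    (hnd : (xs ++ ⌞range' (shift p q l α j) (width p q l α j)⌟ ++ ys).Nodup) :
    blockPerm p q l α L hL j *
        formPerm (xs ++ ⌞range' (shift p q l α j) (width p q l α j)⌟ ++ ys) =
      formPerm (xs ++ ⌞blockTrace p q l α j⌟ ++ ys) *
        swapProd ((blockSwaps p q l α j).map (Prod.map (mkFin L hL) (mkFin L hL))) := by
  have he : 0 < tailLen p q l j := by unfold tailLen; split_ifs <;> omega
  by_cases hjp : j < p
  · have hβ : blockPerm p q l α L hL j =
        evenBlock L hL (shift p q l α j) (alpha p q α j / 2) := by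
      simp [blockPerm, alpha, hjp, show j < p + 2 * q by omega]
    rw [width_of_lt hjp] at hnd ⊢
    simpa [hβ, blockTrace, blockSwaps, hjp] using evenBlock_mul_formPerm_evenTrace hL he hnd
  · have hβ : blockPerm p q l α L hL j = oddBlock L hL (shift p q l α j)
        (alpha p q α (p + 2 * (j - p)) / 2) (alpha p q α (p + 2 * (j - p) + 1) / 2) := by
      simp [blockPerm, alpha, hjp, hj, show p + 2 * (j - p) < p + 2 * q by omega,
        show p + 2 * (j - p) + 1 < p + 2 * q by omega]
    rw [width_of_ge (not_lt.1 hjp) hj] at hnd ⊢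
    rw [hβ, oddBlock_mul_formPerm_oddTrace hL he hnd, blockTrace, blockSwaps, if_neg hjp,
      if_neg hjp]

theorem map_longCycle_append_perm (hshift : shift p q l α (p + q) = L) :
    ⌞longCycle p q l α⌟ ++
        ((twoCycles p q l α).map (Prod.map (mkFin L hL) (mkFin L hL))).flatMap
          (fun p => [p.1, p.2]) ~ finRange L := by
  have h := (longCycle_append_perm (p := p) (q := q) (l := l) (α := α)).map (mkFin L hL)
  rwa [hshift, ← range_eq_range', map_mkFin_range, map_append, ← flatMap_pair_map_prodMap] at h

theorem sigmaB_mul_finRotate (hl : 1 ≤ l) (hshift : shift p q l α (p + q) = L) :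
    sigmaB L hL p q l α * finRotate L =
      formPerm ⌞longCycle p q l α⌟ *
        swapProd ((twoCycles p q l α).map (Prod.map (mkFin L hL) (mkFin L hL))) := by
  have hrange : finRange L =
      (range (p + q)).flatMap (fun j => ⌞range' (shift p q l α j) (width p q l α j)⌟) ++ [] := by
    rw [append_nil, ← map_flatMap, flatMap_range_range'_shift, hshift, ← range_eq_range',
      map_mkFin_range]
  have hnd := hrange ▸ nodup_finRange L
  rw [finRotate_eq_formPerm_finRange, hrange, sigmaB_eq_prod_blockPerm,
    prod_mul_formPerm_flatMap (fun j hj _ _ hnd => blockPerm_mul_formPerm hL hl hj hnd)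
      (fun j hj => ((sublist_append_left _ _).map _).subperm.trans
        ((blockTrace_append_perm hj).map _).subperm) hnd,
    append_nil, longCycle, twoCycles, map_flatMap, map_flatMap]

end Assembly

end Origami

/-- **Lemma.** Let `α₁, …, α_p` be positive even and `α_{p+1}, …, α_{p+2q}` positive odd
numbers (`p ≥ 1` if `q = 0`), `l ≥ 1`, and `L = (3/2)(α₁+⋯+α_{p+2q}) + p + 3q + l - 1`.
With `σ_a = (0 1 ⋯ L-1)` and `σ_b` the product of the shifted block permutations, the
permutation `σ_b ∘ σ_a` has cycle type consisting of one cycle of length `L - 4q`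
and `2q` cycles of length `2`. -/
theorem sigmaB_mul_sigmaA_cycleType (p q l : ℕ) (hl : 1 ≤ l) (hpq : q = 0 → 1 ≤ p)
    (α : Fin (p + 2 * q) → ℕ)
    (hEven : ∀ i : Fin (p + 2 * q), (i : ℕ) < p → Even (α i) ∧ 0 < α i)
    (hOdd : ∀ i : Fin (p + 2 * q), p ≤ (i : ℕ) → Odd (α i) ∧ 0 < α i)
    (L : ℕ) (hLdef : L = 3 * (∑ i, α i) / 2 + p + 3 * q + l - 1) (hL : 0 < L)
    (σa σb : Equiv.Perm (Fin L))
    (ha : σa = finRotate L)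
    (hb : σb = Origami.sigmaB L hL p q l α) :
    (σb * σa).cycleType = (L - 4 * q) ::ₘ Multiset.replicate (2 * q) 2 := by
  have hshift : Origami.shift p q l α (p + q) = L := by
    rw [Origami.shift_add_eq hl hpq (fun i hi => (hEven i hi).1) (fun i hi => (hOdd i hi).1),
      hLdef]
  have hpos : ∀ i, 0 < α i := fun i =>
    (lt_or_ge (i : ℕ) p).elim (fun hi => (hEven i hi).2) fun hi => (hOdd i hi).2
  have hlen := Origami.length_longCycle (l := l) (α := α)
  have hL4 := Origami.four_mul_add_two_le hl hpq hpos
  rw [ha, hb, Origami.sigmaB_mul_finRotate hL hl hshift, List.cycleType_formPerm_mul_swapProd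
    ((Origami.map_longCycle_append_perm hL hshift).nodup_iff.2 (List.nodup_finRange L))
    (by rw [List.length_map]; omega), List.length_map, List.length_map, Origami.length_twoCycles]
  congr 1
  omega
end

section
/- Let q ≥ 1 and L > 4q be natural numbers with gcd(L, 30q) = 1 and such that neither 3 nor 5 divides L − 4q. Let Γ be a subgroup of SL(2,ℤ) containing the three matrices T^L, T'^{15}, and T''^{2(L−4q)}, where T'' = T'·T·T'⁻¹. Then for every n ≥ 1 the canonical projection SL(2,ℤ) → SL(2,ℤ/nℤ) maps Γ onto all of SL(2,ℤ/nℤ), i.e. Γ is a totally non congruence group. -/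
/-- The matrix `T' = [[1,0],[1,1]]` in `SL(2,ℤ)`. -/
def Tmat' : Matrix.SpecialLinearGroup (Fin 2) ℤ :=
  ⟨!![1, 0; 1, 1], by norm_num [Matrix.det_fin_two_of]⟩

open Matrix MatrixGroups

namespace Subgroup

variable {G K : Type*} [Group G] [Group K]

theorem map_mem_map_of_pow_mem (φ : G →* K) {Γ : Subgroup G} {g : G} {n k : ℕ}
    (hg : φ g ^ n = 1) (hk : k.Coprime n) (h : g ^ k ∈ Γ) : φ g ∈ Γ.map φ :=
  zpowers_le.mpr (by simpa using mem_map_of_mem φ h)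
    (mem_zpowers_pow_iff.mpr (hk.coprime_dvd_right (orderOf_dvd_of_pow_eq_one hg)))

theorem pow_mul_mem_inf_ker (φ : G →* K) {Γ : Subgroup G} {g : G} {a n : ℕ} (hg : φ g ^ n = 1)
    (h : g ^ a ∈ Γ) : g ^ (a * n) ∈ Γ ⊓ φ.ker :=
  mem_inf.mpr ⟨pow_mul g a n ▸ pow_mem h n,
    MonoidHom.mem_ker.mpr (by rw [map_pow, mul_comm, pow_mul, hg, one_pow])⟩

theorem map_eq_top_of_map_inf_ker_eq_top {K₁ K₂ : Type*} [Group K₁] [Group K₂]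
    (φ : G →* K) (ψ₁ : K →* K₁) (ψ₂ : K →* K₂) (hψ : ψ₁.ker ⊓ ψ₂.ker = ⊥) {Γ : Subgroup G}
    (h₂ : Γ.map (ψ₂.comp φ) = ⊤) (h₁ : (Γ ⊓ (ψ₂.comp φ).ker).map (ψ₁.comp φ) = ⊤) :
    Γ.map φ = ⊤ := by
  refine (eq_top_iff' _).mpr fun A => ?_
  obtain ⟨g, hgΓ, hg⟩ := mem_map.mp (h₂ ▸ mem_top (ψ₂ A))
  obtain ⟨h, ⟨hhΓ, hhker⟩, hh⟩ := mem_map.mp (h₁ ▸ mem_top (ψ₁ ((φ g)⁻¹ * A)))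
  have hker : (φ h)⁻¹ * ((φ g)⁻¹ * A) ∈ ψ₁.ker ⊓ ψ₂.ker := by
    refine ⟨?_, ?_⟩ <;> simp_all
  have : φ h = (φ g)⁻¹ * A := by
    rw [hψ, mem_bot, inv_mul_eq_one] at hker
    exact hker
  exact ⟨g * h, mul_mem hgΓ hhΓ, by rw [map_mul, this, mul_inv_cancel_left]⟩

end Subgroup

theorem ZMod.isLocalRing_prime_pow_s10 {p k : ℕ} [Fact p.Prime] (hk : k ≠ 0) :
    IsLocalRing (ZMod (p ^ k)) :=
  have : Fact (1 < p ^ k) := ⟨Nat.one_lt_pow hk (Fact.out : p.Prime).one_lt⟩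
  IsLocalRing.of_surjective' (PadicInt.toZModPow k) (ZMod.ringHom_surjective _)

namespace Matrix.SpecialLinearGroup

variable {R S : Type*} [CommRing R] [CommRing S]

def upperUnipotent (x : R) : SL(2, R) := ⟨!![1, x; 0, 1], by simp [det_fin_two_of]⟩

def lowerUnipotent (x : R) : SL(2, R) := ⟨!![1, 0; x, 1], by simp [det_fin_two_of]⟩

@[simp]
lemma coe_upperUnipotent (x : R) :
    (upperUnipotent x : Matrix (Fin 2) (Fin 2) R) = !![1, x; 0, 1] :=
  rfl

@[simp]
lemma coe_lowerUnipotent (x : R) :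
    (lowerUnipotent x : Matrix (Fin 2) (Fin 2) R) = !![1, 0; x, 1] :=
  rfl

@[simp]
lemma upperUnipotent_zero : upperUnipotent (0 : R) = 1 := by
  ext i j; fin_cases i <;> fin_cases j <;> simp

@[simp]
lemma lowerUnipotent_zero : lowerUnipotent (0 : R) = 1 := by
  ext i j; fin_cases i <;> fin_cases j <;> simp

lemma upperUnipotent_pow (x : R) (k : ℕ) : upperUnipotent x ^ k = upperUnipotent (k * x) := by
  induction k with
  | zero => simp
  | succ k ih =>
    ext i j
    fin_cases i <;> fin_cases j <;> simp [pow_succ, ih, add_mul, add_comm]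

lemma lowerUnipotent_pow (x : R) (k : ℕ) : lowerUnipotent x ^ k = lowerUnipotent (k * x) := by
  induction k with
  | zero => simp
  | succ k ih =>
    ext i j
    fin_cases i <;> fin_cases j <;> simp [pow_succ, ih, add_mul, add_comm]

lemma map_upperUnipotent (f : R →+* S) (x : R) :
    map f (upperUnipotent x) = upperUnipotent (f x) := by
  ext i j; fin_cases i <;> fin_cases j <;> simp

lemma map_lowerUnipotent (f : R →+* S) (x : R) :
    map f (lowerUnipotent x) = lowerUnipotent (f x) := by
  ext i j; fin_cases i <;> fin_cases j <;> simp

lemma mem_of_isUnit_apply_one_zero {H : Subgroup SL(2, R)} (hu : ∀ x, upperUnipotent x ∈ H)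
    (hl : ∀ x, lowerUnipotent x ∈ H) {A : SL(2, R)} (hA : IsUnit (A 1 0)) : A ∈ H := by
  obtain ⟨c, hc⟩ := hA
  have hdet : A 0 0 * A 1 1 - A 0 1 * A 1 0 = 1 := by rw [← det_fin_two]; exact A.det_coe
  have hA : A = upperUnipotent ((A 0 0 - 1) * ↑c⁻¹) * lowerUnipotent (A 1 0) *
      upperUnipotent ((A 1 1 - 1) * ↑c⁻¹) := by
    have hcc : A 1 0 * ↑c⁻¹ = 1 := by rw [← hc, Units.mul_inv]
    ext i j
    fin_cases i <;> fin_cases j <;> simp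
    · linear_combination (1 - A 0 0) * hcc
    · linear_combination (-(A 0 1 + (A 0 0 - 1) * (A 1 1 - 1) * ↑c⁻¹)) * hcc - ↑c⁻¹ * hdet
    · linear_combination (1 - A 1 1) * hcc
  rw [hA]
  exact mul_mem (mul_mem (hu _) (hl _)) (hu _)

lemma eq_top_of_unipotent_mem [IsLocalRing R] {H : Subgroup SL(2, R)}
    (hu : ∀ x, upperUnipotent x ∈ H) (hl : ∀ x, lowerUnipotent x ∈ H) : H = ⊤ := by
  refine (Subgroup.eq_top_iff' _).mpr fun A => ?_
  have hdet : A 0 0 * A 1 1 + -(A 0 1 * A 1 0) = 1 := by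
    rw [← sub_eq_add_neg, ← det_fin_two]; exact A.det_coe
  rcases IsLocalRing.isUnit_or_isUnit_of_add_one hdet with h | h
  · -- `w = [[0, -1], [1, 0]]` moves the first row of `A` to the second
    set w := upperUnipotent (-1 : R) * lowerUnipotent 1 * upperUnipotent (-1)
    have hw : w ∈ H := mul_mem (mul_mem (hu _) (hl _)) (hu _)
    have hwA : (w * A) 1 0 = A 0 0 := by simp [w, vecMul, dotProduct]
    have := mem_of_isUnit_apply_one_zero hu hl (hwA ▸ isUnit_of_mul_isUnit_left h)
    simpa using mul_mem (inv_mem hw) this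
  · exact mem_of_isUnit_apply_one_zero hu hl
      (isUnit_of_mul_isUnit_right ((IsUnit.neg_iff _).mp h))

theorem ker_map_inf_ker_map {ι : Type*} [Fintype ι] [DecidableEq ι] {S' : Type*} [CommRing S']
    (f : R →+* S) (f' : R →+* S') (hf : Function.Injective (f.prod f')) :
    (map (n := ι) f).ker ⊓ (map f').ker = ⊥ := by
  refine eq_bot_iff.mpr fun A ⟨hf₁, hf₂⟩ => ?_
  ext i j
  refine hf (Prod.ext ?_ ?_)
  · simpa [one_apply, apply_ite] using congr($hf₁ i j)
  · simpa [one_apply, apply_ite] using congr($hf₂ i j)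

theorem ker_map_castHom_inf_ker_map_castHom {ι : Type*} [Fintype ι] [DecidableEq ι] {u v : ℕ}
    (huv : u.Coprime v) :
    (map (n := ι) (ZMod.castHom (dvd_mul_right u v) (ZMod u))).ker ⊓
      (map (ZMod.castHom (dvd_mul_left v u) (ZMod v))).ker = ⊥ := by
  refine ker_map_inf_ker_map _ _ ?_
  rw [Subsingleton.elim (RingHom.prod _ _) (ZMod.chineseRemainder huv : ZMod (u * v) →+* _)]
  exact (ZMod.chineseRemainder huv).injective

end Matrix.SpecialLinearGroup

open Matrix.SpecialLinearGroup

local notation "SLMOD(" N ")" =>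
  @Matrix.SpecialLinearGroup.map (Fin 2) _ _ _ _ _ _ (Int.castRingHom (ZMod N))

lemma map_castHom_comp_reduction {m n : ℕ} (h : m ∣ n) :
    (SpecialLinearGroup.map (ZMod.castHom h (ZMod m))).comp SLMOD(n) = SLMOD(m) := by
  ext A i j
  simp

lemma Tmat'_mul_Tmat_mul_Tmat'_inv : Tmat' * Tmat * Tmat'⁻¹ = Tmat * Tmat'⁻¹ * Tmat⁻¹ := by
  decide

section Reduction

variable {n : ℕ}

lemma reduction_Tmat : SLMOD(n) Tmat = upperUnipotent 1 := by
  rw [show Tmat = upperUnipotent 1 from rfl, map_upperUnipotent, map_one]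

lemma reduction_Tmat' : SLMOD(n) Tmat' = lowerUnipotent 1 := by
  rw [show Tmat' = lowerUnipotent 1 from rfl, map_lowerUnipotent, map_one]

lemma reduction_Tmat_pow_self : SLMOD(n) Tmat ^ n = 1 := by
  rw [reduction_Tmat, upperUnipotent_pow, mul_one, ZMod.natCast_self, upperUnipotent_zero]

lemma reduction_Tmat'_pow_self : SLMOD(n) Tmat' ^ n = 1 := by
  rw [reduction_Tmat', lowerUnipotent_pow, mul_one, ZMod.natCast_self, lowerUnipotent_zero]

lemma reduction_conj_Tmat_pow_self : SLMOD(n) (Tmat' * Tmat * Tmat'⁻¹) ^ n = 1 := by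
  rw [map_mul, map_mul, map_inv, conj_pow, reduction_Tmat_pow_self, mul_one, mul_inv_cancel]

lemma map_reduction_eq_top_of_Tmat_mem [NeZero n] [IsLocalRing (ZMod n)]
    {Γ : Subgroup SL(2, ℤ)} (hT : SLMOD(n) Tmat ∈ Γ.map SLMOD(n))
    (hT' : SLMOD(n) Tmat' ∈ Γ.map SLMOD(n)) :
    Γ.map SLMOD(n) = ⊤ := by
  refine eq_top_of_unipotent_mem (fun x => ?_) (fun x => ?_)
  · rw [← ZMod.natCast_zmod_val x, ← mul_one (x.val : ZMod n), ← upperUnipotent_pow,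
      ← reduction_Tmat]
    exact pow_mem hT _
  · rw [← ZMod.natCast_zmod_val x, ← mul_one (x.val : ZMod n), ← lowerUnipotent_pow,
      ← reduction_Tmat']
    exact pow_mem hT' _

end Reduction

theorem map_reduction_prime_pow_eq_top {p k a b c : ℕ} (hp : p.Prime) (hk : k ≠ 0)
    (hab : ¬(p ∣ a ∧ p ∣ b)) (hac : ¬(p ∣ a ∧ p ∣ c)) (hbc : ¬(p ∣ b ∧ p ∣ c))
    {Γ : Subgroup SL(2, ℤ)} (ha : Tmat ^ a ∈ Γ) (hb : Tmat' ^ b ∈ Γ)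
    (hc : (Tmat' * Tmat * Tmat'⁻¹) ^ c ∈ Γ) : Γ.map SLMOD(p ^ k) = ⊤ := by
  have := Fact.mk hp
  have := ZMod.isLocalRing_prime_pow_s10 (p := p) hk
  have : NeZero (p ^ k) := ⟨pow_ne_zero k hp.ne_zero⟩
  have coprime_of_not_dvd {e : ℕ} (he : ¬p ∣ e) : e.Coprime (p ^ k) :=
    ((hp.coprime_iff_not_dvd.mpr he).symm).pow_right k
  set K := (Γ.map SLMOD(p ^ k)).comap SLMOD(p ^ k)
  have hT (h : ¬p ∣ a) : Tmat ∈ K :=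
    Subgroup.map_mem_map_of_pow_mem _ reduction_Tmat_pow_self (coprime_of_not_dvd h) ha
  have hT' (h : ¬p ∣ b) : Tmat' ∈ K :=
    Subgroup.map_mem_map_of_pow_mem _ reduction_Tmat'_pow_self (coprime_of_not_dvd h) hb
  have hT'' (h : ¬p ∣ c) : Tmat' * Tmat * Tmat'⁻¹ ∈ K :=
    Subgroup.map_mem_map_of_pow_mem _ reduction_conj_Tmat_pow_self (coprime_of_not_dvd h) hc
  refine map_reduction_eq_top_of_Tmat_mem ?_ ?_
  · by_cases hpa : p ∣ a
    · have hT'K := hT' fun hpb => hab ⟨hpa, hpb⟩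
      have := mul_mem (mul_mem (inv_mem hT'K) (hT'' fun hpc => hac ⟨hpa, hpc⟩)) hT'K
      rwa [show Tmat'⁻¹ * (Tmat' * Tmat * Tmat'⁻¹) * Tmat' = Tmat by group] at this
    · exact hT hpa
  · by_cases hpb : p ∣ b
    · have hTK := hT fun hpa => hab ⟨hpa, hpb⟩
      have := inv_mem (mul_mem (mul_mem (inv_mem hTK) (hT'' fun hpc => hbc ⟨hpb, hpc⟩)) hTK)
      rwa [Tmat'_mul_Tmat_mul_Tmat'_inv,
        show (Tmat⁻¹ * (Tmat * Tmat'⁻¹ * Tmat⁻¹) * Tmat)⁻¹ = Tmat' by group] at this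
    · exact hT' hpb

theorem map_reduction_eq_top {n a b c : ℕ} (hn : n ≠ 0) (hab : (a.gcd b).Coprime n)
    (hac : (a.gcd c).Coprime n) (hbc : (b.gcd c).Coprime n) {Γ : Subgroup SL(2, ℤ)}
    (ha : Tmat ^ a ∈ Γ) (hb : Tmat' ^ b ∈ Γ) (hc : (Tmat' * Tmat * Tmat'⁻¹) ^ c ∈ Γ) :
    Γ.map SLMOD(n) = ⊤ := by
  induction n using Nat.recOnPosPrimePosCoprime generalizing a b c Γ with
  | prime_pow p k hp hk =>
    have not_dvd {x y : ℕ} (h : (x.gcd y).Coprime (p ^ k)) : ¬(p ∣ x ∧ p ∣ y) :=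
      fun ⟨hx, hy⟩ => hp.one_lt.ne'
        ((h.coprime_dvd_left (Nat.dvd_gcd hx hy)).eq_one_of_dvd (dvd_pow_self p hk.ne'))
    exact map_reduction_prime_pow_eq_top hp hk.ne' (not_dvd hab) (not_dvd hac) (not_dvd hbc)
      ha hb hc
  | zero => exact absurd rfl hn
  | one => exact (Subgroup.eq_top_iff' _).mpr fun A =>
      (Matrix.SpecialLinearGroup.ext 1 A fun _ _ => Subsingleton.elim _ _) ▸ one_mem _
  | coprime u v _ _ huv ihu ihv =>
    refine Subgroup.map_eq_top_of_map_inf_ker_eq_top _ _ _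
      (ker_map_castHom_inf_ker_map_castHom huv) ?_ ?_
    · rw [map_castHom_comp_reduction]
      exact ihv (by omega) (hab.coprime_dvd_right (dvd_mul_left v u))
        (hac.coprime_dvd_right (dvd_mul_left v u)) (hbc.coprime_dvd_right (dvd_mul_left v u))
        ha hb hc
    · rw [map_castHom_comp_reduction, map_castHom_comp_reduction]
      have scale {x y : ℕ} (h : (x.gcd y).Coprime (u * v)) : ((x * v).gcd (y * v)).Coprime u := by
        rw [Nat.gcd_mul_right]
        exact (h.coprime_dvd_right (dvd_mul_right u v)).mul_left huv.symm
      exact ihu (by omega) (scale hab) (scale hac) (scale hbc)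
        (Subgroup.pow_mul_mem_inf_ker _ reduction_Tmat_pow_self ha)
        (Subgroup.pow_mul_mem_inf_ker _ reduction_Tmat'_pow_self hb)
        (Subgroup.pow_mul_mem_inf_ker _ reduction_conj_Tmat_pow_self hc)

theorem map_reduction_eq_top_of_pairwise_coprime {n a b c : ℕ} (hn : n ≠ 0) (hab : a.Coprime b)
    (hac : a.Coprime c) (hbc : b.Coprime c) {Γ : Subgroup SL(2, ℤ)} (ha : Tmat ^ a ∈ Γ)
    (hb : Tmat' ^ b ∈ Γ) (hc : (Tmat' * Tmat * Tmat'⁻¹) ^ c ∈ Γ) :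
    Γ.map SLMOD(n) = ⊤ :=
  map_reduction_eq_top hn (hab.gcd_eq_one ▸ Nat.coprime_one_left n)
    (hac.gcd_eq_one ▸ Nat.coprime_one_left n) (hbc.gcd_eq_one ▸ Nat.coprime_one_left n) ha hb hc

lemma coprime_exponents {q L : ℕ} (hL : 4 * q < L) (hgcd : L.gcd (30 * q) = 1)
    (h3 : ¬3 ∣ L - 4 * q) (h5 : ¬5 ∣ L - 4 * q) :
    L.Coprime 15 ∧ L.Coprime (2 * (L - 4 * q)) ∧ Nat.Coprime 15 (2 * (L - 4 * q)) := by
  have hL2 : L.Coprime 2 := Nat.Coprime.coprime_dvd_right ⟨15 * q, by ring⟩ hgcd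
  have hLq : L.Coprime q := Nat.Coprime.coprime_dvd_right ⟨30, by ring⟩ hgcd
  have hL4q : L.Coprime (4 * q) := (hL2.pow_right 2).mul_right hLq
  refine ⟨Nat.Coprime.coprime_dvd_right ⟨2 * q, by ring⟩ hgcd,
    hL2.mul_right ((Nat.coprime_self_sub_right hL.le).mpr hL4q), ?_⟩
  exact Nat.Coprime.mul_right (by norm_num) (Nat.Coprime.mul_left
    (Nat.prime_three.coprime_iff_not_dvd.mpr h3) (Nat.prime_five.coprime_iff_not_dvd.mpr h5))

theorem totally_noncongruence_of_three_parabolics_general (q L : ℕ) (hL : 4 * q < L)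
    (hgcd : Nat.gcd L (30 * q) = 1)
    (h3 : ¬ (3 ∣ (L - 4 * q))) (h5 : ¬ (5 ∣ (L - 4 * q)))
    (Γ : Subgroup (Matrix.SpecialLinearGroup (Fin 2) ℤ))
    (hT : Tmat ^ L ∈ Γ) (hT' : Tmat' ^ 15 ∈ Γ)
    (hT'' : (Tmat' * Tmat * Tmat'⁻¹) ^ (2 * (L - 4 * q)) ∈ Γ) :
    ∀ n : ℕ, 1 ≤ n →
      Subgroup.map (Matrix.SpecialLinearGroup.map (Int.castRingHom (ZMod n))) Γ = ⊤ := by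
  intro n hn
  obtain ⟨h₁, h₂, h₃⟩ := coprime_exponents hL hgcd h3 h5
  exact map_reduction_eq_top_of_pairwise_coprime (by omega) h₁ h₂ h₃ hT hT' hT''

/-- **Proposition.** Let `q ≥ 1` and `L > 4q` with `gcd(L, 30q) = 1` and such that neither
`3` nor `5` divides `L - 4q`. Any subgroup `Γ ≤ SL(2,ℤ)` containing `T^L`, `T'^15` and
`T''^{2(L-4q)}` (where `T'' = T'TT'⁻¹`) surjects onto `SL(2,ℤ/nℤ)` for every `n ≥ 1`,
i.e. `Γ` is a totally non congruence group. -/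
theorem totally_noncongruence_of_three_parabolics (q L : ℕ) (hq : 1 ≤ q) (hL : 4 * q < L)
    (hgcd : Nat.gcd L (30 * q) = 1)
    (h3 : ¬ (3 ∣ (L - 4 * q))) (h5 : ¬ (5 ∣ (L - 4 * q)))
    (Γ : Subgroup (Matrix.SpecialLinearGroup (Fin 2) ℤ))
    (hT : Tmat ^ L ∈ Γ) (hT' : Tmat' ^ 15 ∈ Γ)
    (hT'' : (Tmat' * Tmat * Tmat'⁻¹) ^ (2 * (L - 4 * q)) ∈ Γ) :
    ∀ n : ℕ, 1 ≤ n →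
      Subgroup.map (Matrix.SpecialLinearGroup.map (Int.castRingHom (ZMod n))) Γ = ⊤ :=
  totally_noncongruence_of_three_parabolics_general q L hL hgcd h3 h5 Γ hT hT' hT''
end

section
/- For every natural number q ≥ 1, the set of primes L satisfying L > 4q, gcd(L, 30q) = 1, 3 ∤ (L − 4q), and 5 ∤ (L − 4q) is infinite. -/
/-!
By Dirichlet's theorem it suffices to exhibit one residue class `c` mod `15`, coprime to `15`,
with `c ≢ 4q` mod `3` and mod `5`: such a class exists because each of `3` and `5` has a
residue other than `0` and `4q`. A prime `L > 4q` in that class then does the job, and it is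
automatically coprime to `30q`: it is odd, prime to `15`, and too large to divide `q`.
-/

open Filter

lemma exists_coprime_fifteen_mod_ne (n : ℕ) :
    ∃ c, c.Coprime 15 ∧ c % 3 ≠ n % 3 ∧ c % 5 ≠ n % 5 := by
  have key : ∀ r < 15, ∃ c < 15, c.Coprime 15 ∧ c % 3 ≠ r % 3 ∧ c % 5 ≠ r % 5 := by decide
  obtain ⟨c, -, hc⟩ := key (n % 15) (Nat.mod_lt _ (by norm_num))
  rw [Nat.mod_mod_of_dvd n (by norm_num : 3 ∣ 15),
    Nat.mod_mod_of_dvd n (by norm_num : 5 ∣ 15)] at hc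
  exact ⟨c, hc⟩

lemma Nat.not_dvd_sub_of_mod_ne {p a b : ℕ} (hba : b ≤ a) (h : a % p ≠ b % p) :
    ¬ p ∣ a - b :=
  fun hdvd => h ((Nat.modEq_iff_dvd' hba).2 hdvd).symm

lemma Nat.Prime.coprime_mul_of_lt {p m n : ℕ} (hp : p.Prime) (hm : p.Coprime m) (hn₀ : n ≠ 0)
    (hnp : n < p) : p.Coprime (m * n) :=
  hm.mul_right (Nat.coprime_of_lt_prime hn₀ hnp hp)

lemma Nat.Prime.coprime_thirty_of_modEq {p c : ℕ} (hp : p.Prime) (hp2 : p ≠ 2) (hc : c.Coprime 15)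
    (hpc : p ≡ c [MOD 15]) : p.Coprime 30 := by
  have h2 : p.Coprime 2 := (Nat.coprime_primes hp Nat.prime_two).2 hp2
  have h15 : p.Coprime 15 := by rwa [Nat.Coprime, hpc.gcd_eq]
  exact h2.mul_right h15

lemma admissible_of_modEq {q L c : ℕ} (hq : q ≠ 0) (hL : L.Prime) (hqL : 4 * q < L)
    (hc : c.Coprime 15) (h3 : c % 3 ≠ 4 * q % 3) (h5 : c % 5 ≠ 4 * q % 5)
    (hLc : L ≡ c [MOD 15]) :
    Nat.gcd L (30 * q) = 1 ∧ ¬ 3 ∣ (L - 4 * q) ∧ ¬ 5 ∣ (L - 4 * q) := by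
  have hL30 : L.Coprime 30 := hL.coprime_thirty_of_modEq (by omega) hc hLc
  refine ⟨hL.coprime_mul_of_lt hL30 hq (by omega), ?_, ?_⟩
  · exact Nat.not_dvd_sub_of_mod_ne hqL.le ((hLc.of_dvd (by norm_num)).trans_ne h3)
  · exact Nat.not_dvd_sub_of_mod_ne hqL.le ((hLc.of_dvd (by norm_num)).trans_ne h5)

/-- For every `q ≥ 1`, there are infinitely many primes `L` with `L > 4q`,
`gcd(L, 30q) = 1`, `3 ∤ (L - 4q)` and `5 ∤ (L - 4q)`. -/
theorem infinitely_many_admissible_primes (q : ℕ) (hq : 1 ≤ q) :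
    {L : ℕ | Nat.Prime L ∧ 4 * q < L ∧ Nat.gcd L (30 * q) = 1 ∧
      ¬ (3 ∣ (L - 4 * q)) ∧ ¬ (5 ∣ (L - 4 * q))}.Infinite := by
  obtain ⟨c, hc, h3, h5⟩ := exists_coprime_fifteen_mod_ne (4 * q)
  have hprimes : ∃ᶠ L in atTop, (L.Prime ∧ L ≡ c [MOD 15]) ∧ 4 * q < L :=
    (Nat.frequently_atTop_prime_and_modEq (by norm_num) hc).and_eventually
      (eventually_gt_atTop _)
  refine (Nat.frequently_atTop_iff_infinite.1 hprimes).mono ?_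
  rintro L ⟨⟨hL, hLc⟩, hqL⟩
  exact ⟨hL, hqL, admissible_of_modEq (by omega) hL hqL hc h3 h5 hLc⟩
end
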